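/- arXiv:math/9707208 — 7 statements merged into one kernel-verified Lean document; each statement's English description precedes it below -/
import Mathlib

section
/- Let X be a compact Hausdorff topological space, let τ ∈ ℂ with |τ| = 1, let ψ : X → X be a homeomorphism, and let t : C(X,ℂ) → ℂ be a linear functional with t(1) ≠ −τ. Then the map φ : C(X,ℂ) → C(X,ℂ) defined by φ(f) = τ·(f ∘ ψ) + t(f)·1 is a bijective linear map satisfying diam(φ(f)(X)) = diam(f(X)) for every f ∈ C(X,ℂ). -/
/-! The map `φ` is the linear bijection `A f = τ • f ∘ ψ` perturbed by the rank-one map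
`f ↦ t f • 1`. As in the Sherman–Morrison formula, `f ↦ A f + t f • A w` is bijective as soon as
`1 + t w ≠ 0`; here `A (τ⁻¹ • 1) = 1`, so the condition reads `t 1 ≠ -τ`. Pointwise,
`φ f = (z ↦ τ z + t f) ∘ f ∘ ψ`, and `z ↦ τ z + c` is an isometry of `ℂ` when `|τ| = 1`, so the range
keeps its diameter. -/

open Function Set

section RankOnePerturbation

variable {K V W : Type*} [Field K] [AddCommGroup V] [Module K V] [AddCommGroup W] [Module K W]

theorem bijective_add_smul_of_one_add_ne_zero (t : V →ₗ[K] K) (w : V) (h : 1 + t w ≠ 0) :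
    Bijective fun f : V => f + t f • w := by
  refine bijective_iff_has_inverse.mpr
    ⟨fun g => g - (t g / (1 + t w)) • w, fun f => ?_, fun g => ?_⟩
  · have hcoef : t (f + t f • w) / (1 + t w) = t f := by
      rw [div_eq_iff h, map_add, map_smul, smul_eq_mul]
      ring
    simp only [hcoef, add_sub_cancel_right]
  · have hcoef : t (g - (t g / (1 + t w)) • w) = t g / (1 + t w) := by
      rw [map_sub, map_smul, smul_eq_mul]
      field_simp
      ring
    simp only [hcoef, sub_add_cancel]

theorem LinearEquiv.bijective_add_smul_of_one_add_ne_zero (A : V ≃ₗ[K] W) (t : V →ₗ[K] K)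
    (w : V) (h : 1 + t w ≠ 0) : Bijective fun f : V => A f + t f • A w := by
  have hcomp : (fun f : V => A f + t f • A w) = A ∘ fun f => f + t f • w := by
    ext f
    simp
  rw [hcomp]
  exact A.bijective.comp (_root_.bijective_add_smul_of_one_add_ne_zero t w h)

end RankOnePerturbation

theorem isometry_mul_add_of_norm_eq_one {𝕜 : Type*} [NormedField 𝕜] {τ : 𝕜} (hτ : ‖τ‖ = 1)
    (c : 𝕜) : Isometry fun z : 𝕜 => τ * z + c :=
  Isometry.of_dist_eq fun a b => by
    rw [dist_add_right, dist_eq_norm, dist_eq_norm, ← mul_sub, norm_mul, hτ, one_mul]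

theorem Isometry.diam_range_comp {α β γ : Type*} [PseudoMetricSpace β] [PseudoMetricSpace γ]
    {e : β → γ} (he : Isometry e) (f : α → β) :
    Metric.diam (range (e ∘ f)) = Metric.diam (range f) := by
  rw [range_comp, he.diam_image]

theorem form_implies_diameter_preserving_bijection_general
    {X : Type*} [TopologicalSpace X]
    (τ : ℂ) (hτ : ‖τ‖ = 1) (ψ : X ≃ₜ X)
    (t : C(X, ℂ) →ₗ[ℂ] ℂ) (ht : t 1 ≠ -τ)
    (φ : C(X, ℂ) →ₗ[ℂ] C(X, ℂ))
    (hφ : ∀ f : C(X, ℂ), φ f = τ • f.comp (ψ : C(X, X)) + t f • (1 : C(X, ℂ))) :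
    Function.Bijective φ ∧
      ∀ f : C(X, ℂ), Metric.diam (Set.range ⇑(φ f)) = Metric.diam (Set.range ⇑f) := by
  have hτ0 : τ ≠ 0 := norm_ne_zero_iff.mp (hτ ▸ one_ne_zero)
  let A : C(X, ℂ) ≃ₗ[ℂ] C(X, ℂ) :=
    (Homeomorph.compStarAlgEquiv' ℂ ℂ ψ).toAlgEquiv.toLinearEquiv.trans
      (LinearEquiv.smulOfNeZero ℂ _ τ hτ0)
  have hA : ∀ f, A f = τ • f.comp (ψ : C(X, X)) := fun f => rfl
  have hA1 : A (τ⁻¹ • 1) = 1 := by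
    rw [hA, ContinuousMap.smul_comp, ContinuousMap.one_comp, smul_inv_smul₀ hτ0]
  refine ⟨?_, fun f => ?_⟩
  · have hφA : ⇑φ = fun f => A f + t f • A (τ⁻¹ • 1) := funext fun f => by rw [hφ, hA, hA1]
    rw [hφA]
    refine A.bijective_add_smul_of_one_add_ne_zero t _ ?_
    rw [map_smul, smul_eq_mul]
    intro h
    apply ht
    field_simp at h
    linear_combination h
  · have hrange : ⇑(φ f) = (fun z => τ * z + t f) ∘ f ∘ ψ := by
      ext x
      simp [hφ]
    rw [hrange, (isometry_mul_add_of_norm_eq_one hτ (t f)).diam_range_comp,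
      ψ.surjective.range_comp]

/-- On a compact Hausdorff space `X`, every linear map of the form
`φ(f) = τ · (f ∘ ψ) + t(f) · 1` with `|τ| = 1`, `ψ` a homeomorphism and `t` a linear
functional with `t(1) ≠ -τ`, is a diameter preserving linear bijection of `C(X,ℂ)`. -/
theorem form_implies_diameter_preserving_bijection
    {X : Type*} [TopologicalSpace X] [CompactSpace X] [T2Space X]
    (τ : ℂ) (hτ : ‖τ‖ = 1) (ψ : X ≃ₜ X)
    (t : C(X, ℂ) →ₗ[ℂ] ℂ) (ht : t 1 ≠ -τ)
    (φ : C(X, ℂ) →ₗ[ℂ] C(X, ℂ))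
    (hφ : ∀ f : C(X, ℂ), φ f = τ • f.comp (ψ : C(X, X)) + t f • (1 : C(X, ℂ))) :
    Function.Bijective φ ∧
      ∀ f : C(X, ℂ), Metric.diam (Set.range ⇑(φ f)) = Metric.diam (Set.range ⇑f) :=
  form_implies_diameter_preserving_bijection_general τ hτ ψ t ht φ hφ
end

section
/- Let n ≥ 1 be a natural number. A linear bijection T : ℝⁿ → ℝⁿ satisfies max_{i,j} |(Tx)_i − (Tx)_j| = max_{i,j} |x_i − x_j| for every x ∈ ℝⁿ if and only if there exist τ ∈ {1, −1}, a permutation σ of {1,…,n}, and a linear functional t : ℝⁿ → ℝ with t(𝟙) ≠ −τ (where 𝟙 = (1,…,1)) such that (Tx)_i = τ·x_{σ(i)} + t(x) for every x ∈ ℝⁿ and every index i. -/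
/-!
`coordDiam x = max x - min x` is a seminorm on `ℝⁿ` whose dual unit ball, written in coordinates, is
`{f | ∑ f = 0 ∧ ∑ |f| ≤ 2}`; the extreme points of this ball are the vectors `e_a - e_b`, `a ≠ b`.
If a linear bijection `T` preserves `coordDiam`, its transpose maps the ball onto itself and so
permutes the extreme points: every row difference `x ↦ (Tx)_i - (Tx)_j` equals some `x ↦ x_a - x_b`.
Measured against a fixed row, the other rows then either all share the index `a` or all share the
index `b`, which is the form `(Tx)_i = τ x_{σ i} + t x`; finally `t 𝟙 = -τ` would give `T 𝟙 = 0`.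
-/

open Finset Function
open scoped Matrix

noncomputable def coordDiam {ι : Type*} (x : ι → ℝ) : ℝ := ⨆ i, ⨆ j, |x i - x j|

section CoordDiam

variable {ι : Type*}

theorem coordDiam_nonneg (x : ι → ℝ) : 0 ≤ coordDiam x :=
  Real.iSup_nonneg fun _ => Real.iSup_nonneg fun _ => abs_nonneg _

theorem coordDiam_le {x : ι → ℝ} {c : ℝ} (h : ∀ i j, |x i - x j| ≤ c) (hc : 0 ≤ c) :
    coordDiam x ≤ c :=
  Real.iSup_le (fun i => Real.iSup_le (h i) hc) hc

theorem abs_sub_le_coordDiam [Finite ι] (x : ι → ℝ) (i j : ι) : |x i - x j| ≤ coordDiam x :=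
  le_ciSup_of_le (Finite.bddAbove_range _) i <|
    le_ciSup (f := fun j => |x i - x j|) (Finite.bddAbove_range _) j

theorem coordDiam_comp_perm (x : ι → ℝ) (σ : Equiv.Perm ι) :
    coordDiam (fun i => x (σ i)) = coordDiam x := by
  unfold coordDiam
  rw [σ.iSup_comp (g := fun i => ⨆ j, |x i - x (σ j)|)]
  exact iSup_congr fun i => σ.iSup_comp (g := fun j => |x i - x j|)

end CoordDiam

def dualBall (ι : Type*) [Fintype ι] : Set (ι → ℝ) := {f | ∑ i, f i = 0 ∧ ∑ i, |f i| ≤ 2}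

section DualBall

variable {ι : Type*} [Fintype ι]

theorem abs_dotProduct_le_coordDiam {f : ι → ℝ} (hf : f ∈ dualBall ι) (x : ι → ℝ) :
    |f ⬝ᵥ x| ≤ coordDiam x := by
  rcases isEmpty_or_nonempty ι with hι | hι
  · simpa [dotProduct] using coordDiam_nonneg x
  obtain ⟨imax, hmax⟩ := Finite.exists_max x
  obtain ⟨imin, hmin⟩ := Finite.exists_min x
  set c := (x imax + x imin) / 2 with hc_def
  have hspread : x imax - x imin ≤ coordDiam x :=
    (le_abs_self _).trans (abs_sub_le_coordDiam x imax imin)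
  have hc : ∀ m, |x m - c| ≤ coordDiam x / 2 := fun m => by
    rw [abs_le]; constructor <;> linarith [hmax m, hmin m]
  -- since `∑ f = 0`, the pairing does not see the shift of `x` by the midpoint `c`
  have hshift : f ⬝ᵥ x = ∑ m, f m * (x m - c) := by
    simp only [dotProduct, mul_sub, sum_sub_distrib, ← sum_mul, hf.1, zero_mul, sub_zero]
  calc |f ⬝ᵥ x| ≤ ∑ m, |f m| * |x m - c| := by
        rw [hshift]; exact (abs_sum_le_sum_abs _ _).trans_eq (by simp only [abs_mul])
    _ ≤ ∑ m, |f m| * (coordDiam x / 2) := by gcongr with m; exact hc m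
    _ ≤ 2 * (coordDiam x / 2) := by
        rw [← sum_mul]; gcongr; exacts [div_nonneg (coordDiam_nonneg x) two_pos.le, hf.2]
    _ = coordDiam x := by ring

theorem mem_dualBall_of_abs_dotProduct_le {f : ι → ℝ}
    (hf : ∀ x, |f ⬝ᵥ x| ≤ coordDiam x) : f ∈ dualBall ι := by
  have hsum : ∑ m, f m = 0 := by
    have h := hf fun _ => 1
    rw [show coordDiam (fun _ : ι => (1 : ℝ)) = 0 from
      le_antisymm (coordDiam_le (by simp) le_rfl) (coordDiam_nonneg _)] at h
    simpa [dotProduct] using h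
  have hpos : ∑ m, max (f m) 0 ≤ 1 := by
    have h := hf fun m => if 0 < f m then 1 else 0
    have hle : coordDiam (fun m => if 0 < f m then (1 : ℝ) else 0) ≤ 1 :=
      coordDiam_le (fun i j => by split_ifs <;> norm_num) zero_le_one
    have heq : f ⬝ᵥ (fun m => if 0 < f m then 1 else 0) = ∑ m, max (f m) 0 := by
      refine sum_congr rfl fun m _ => ?_
      dsimp only
      split_ifs with hm
      · simp [hm.le]
      · simp [not_lt.mp hm]
    exact heq ▸ (le_abs_self _).trans (h.trans hle)
  refine ⟨hsum, ?_⟩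
  have habs : ∀ m, |f m| = 2 * max (f m) 0 - f m := fun m => by
    rcases le_total (f m) 0 with hm | hm
    · simp [abs_of_nonpos hm, hm]
    · rw [abs_of_nonneg hm, max_eq_left hm]; ring
  simp only [habs, sum_sub_distrib, ← mul_sum, hsum]
  linarith

theorem mem_dualBall_iff {f : ι → ℝ} : f ∈ dualBall ι ↔ ∀ x, |f ⬝ᵥ x| ≤ coordDiam x :=
  ⟨abs_dotProduct_le_coordDiam, mem_dualBall_of_abs_dotProduct_le⟩

end DualBall

section ExtremePoints

variable {ι : Type*} [Fintype ι] [DecidableEq ι]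

theorem sum_single_sub_single (a b : ι) : ∑ m, (Pi.single a 1 - Pi.single b 1 : ι → ℝ) m = 0 := by
  simp [sum_sub_distrib]

theorem sum_abs_single_sub_single {a b : ι} (hab : a ≠ b) :
    ∑ m, |(Pi.single a 1 - Pi.single b 1 : ι → ℝ) m| = 2 := by
  rw [Fintype.sum_eq_add a b hab fun m hm => by simp [hm.1, hm.2]]
  norm_num [hab, hab.symm]

theorem single_sub_single_mem_dualBall {a b : ι} (hab : a ≠ b) :
    (Pi.single a 1 - Pi.single b 1 : ι → ℝ) ∈ dualBall ι :=
  ⟨sum_single_sub_single a b, (sum_abs_single_sub_single hab).le⟩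

theorem apply_sub_apply_le_two {f : ι → ℝ} (hf : f ∈ dualBall ι) {a b : ι} (hab : a ≠ b) :
    f a - f b ≤ 2 :=
  calc f a - f b ≤ |f a| + |f b| := by linarith [le_abs_self (f a), neg_abs_le (f b)]
    _ = ∑ m ∈ {a, b}, |f m| := (sum_pair (f := fun m => |f m|) hab).symm
    _ ≤ ∑ m, |f m| := sum_le_univ_sum_of_nonneg fun _ => abs_nonneg _
    _ ≤ 2 := hf.2

theorem eq_single_sub_single_of_apply_sub_apply_eq_two {f : ι → ℝ} (hf : f ∈ dualBall ι)
    {a b : ι} (hab : a ≠ b) (h : f a - f b = 2) : f = Pi.single a 1 - Pi.single b 1 := by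
  have hsplit : ∑ m, |f m| = |f a| + |f b| + ∑ m ∈ (univ.erase a).erase b, |f m| := by
    rw [← add_sum_erase _ _ (mem_univ a), ← add_sum_erase _ _ (mem_erase.2 ⟨hab.symm, mem_univ b⟩),
      add_assoc]
  have hrest : ∀ m, m ≠ a ∧ m ≠ b → f m = 0 := by
    have hnonneg : ∀ m ∈ (univ.erase a).erase b, 0 ≤ |f m| := fun _ _ => abs_nonneg _
    have hzero : ∑ m ∈ (univ.erase a).erase b, |f m| = 0 :=
      le_antisymm (by linarith [hf.2, le_abs_self (f a), neg_abs_le (f b)])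
        (sum_nonneg hnonneg)
    intro m hm
    exact abs_eq_zero.1 <| (sum_eq_zero_iff_of_nonneg hnonneg).1 hzero m (by simp [hm.1, hm.2])
  have hab0 : f a + f b = 0 := by rw [← Fintype.sum_eq_add a b hab hrest, hf.1]
  ext m
  rcases eq_or_ne m a with rfl | hma
  · simp only [Pi.sub_apply, Pi.single_eq_same, Pi.single_eq_of_ne hab]; linarith
  rcases eq_or_ne m b with rfl | hmb
  · simp only [Pi.sub_apply, Pi.single_eq_same, Pi.single_eq_of_ne hma]; linarith
  simp [hma, hmb, hrest m ⟨hma, hmb⟩]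

theorem single_sub_single_mem_extremePoints {a b : ι} (hab : a ≠ b) :
    (Pi.single a 1 - Pi.single b 1 : ι → ℝ) ∈ (dualBall ι).extremePoints ℝ := by
  refine ⟨single_sub_single_mem_dualBall hab, fun g hg h hh ⟨α, β, hα, hβ, hαβ, hw⟩ => ?_⟩
  have hwa := congrFun hw a
  have hwb := congrFun hw b
  simp only [Pi.add_apply, Pi.smul_apply, smul_eq_mul, Pi.sub_apply, Pi.single_eq_same,
    Pi.single_eq_of_ne hab, Pi.single_eq_of_ne hab.symm] at hwa hwb
  refine eq_single_sub_single_of_apply_sub_apply_eq_two hg hab ?_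
  nlinarith [apply_sub_apply_le_two hg hab, apply_sub_apply_le_two hh hab]

theorem exists_eq_single_sub_single_of_mem_extremePoints [Nontrivial ι] {f : ι → ℝ}
    (hf : f ∈ (dualBall ι).extremePoints ℝ) :
    ∃ a b, a ≠ b ∧ f = Pi.single a 1 - Pi.single b 1 := by
  obtain ⟨hfB, hext⟩ := hf
  have hf0 : ∃ m ∈ univ, f m ≠ 0 := by
    by_contra! hf0
    simp only [mem_univ, forall_const] at hf0
    obtain ⟨a, b, hab⟩ := exists_pair_ne ι
    have h := hext (single_sub_single_mem_dualBall hab) (single_sub_single_mem_dualBall hab.symm)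
      ⟨1 / 2, 1 / 2, by norm_num, by norm_num, by norm_num, by ext m; simp [hf0 m]; ring⟩
    simpa [hab, hf0] using congrFun h a
  obtain ⟨a, -, ha⟩ := exists_pos_of_sum_zero_of_exists_nonzero f hfB.1 hf0
  obtain ⟨b, -, hb⟩ := exists_pos_of_sum_zero_of_exists_nonzero (s := univ) (-f)
    (by simp [hfB.1]) (by simpa using hf0)
  rw [Pi.neg_apply, neg_pos] at hb
  have hab : a ≠ b := by rintro rfl; linarith
  -- `f = l • w + (1 - l) • g` with `g` in the ball, as long as `l` keeps the signs of `f a`, `f b`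
  set w : ι → ℝ := Pi.single a 1 - Pi.single b 1
  set l := min (min (f a) (-f b)) (1 / 2)
  have hl0 : 0 < l := lt_min (lt_min ha (neg_pos.2 hb)) one_half_pos
  have hl1 : 0 < 1 - l := by linarith [show l ≤ 1 / 2 from min_le_right _ _]
  have hla : l ≤ f a := (min_le_left _ _).trans (min_le_left _ _)
  have hlb : l ≤ -f b := (min_le_left _ _).trans (min_le_right _ _)
  have habs : ∀ m, |f m - l * w m| = |f m| - l * |w m| := by
    intro m
    rcases eq_or_ne m a with rfl | hma
    · simp [w, hab, abs_of_pos ha, abs_of_nonneg (sub_nonneg.2 hla)]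
    rcases eq_or_ne m b with rfl | hmb
    · simp [w, hma, abs_of_neg hb, abs_of_nonpos (by linarith : f m + l ≤ 0)]
      ring
    · simp [w, hma, hmb]
  set g := (1 - l)⁻¹ • (f - l • w)
  have hg : g ∈ dualBall ι := by
    refine ⟨?_, ?_⟩
    · simp [g, mul_sub, sum_sub_distrib, ← mul_sum, hfB.1, w]
    have hw : ∑ m, |w m| = 2 := sum_abs_single_sub_single hab
    calc ∑ m, |g m| = (1 - l)⁻¹ * (∑ m, |f m| - l * ∑ m, |w m|) := by
          simp only [g, Pi.smul_apply, Pi.sub_apply, smul_eq_mul, abs_mul, abs_inv,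
            abs_of_pos hl1, habs, ← mul_sum, sum_sub_distrib]
      _ ≤ (1 - l)⁻¹ * (2 - l * 2) := by rw [hw]; gcongr; exact hfB.2
      _ = 2 := by field_simp
  have h := hext (single_sub_single_mem_dualBall hab) hg
    ⟨l, 1 - l, hl0, hl1, by ring,
      by rw [smul_smul, mul_inv_cancel₀ hl1.ne', one_smul, add_sub_cancel]⟩
  exact ⟨a, b, hab, h.symm⟩

theorem extremePoints_dualBall [Nontrivial ι] :
    (dualBall ι).extremePoints ℝ = {f | ∃ a b, a ≠ b ∧ f = Pi.single a 1 - Pi.single b 1} := by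
  ext f
  refine ⟨exists_eq_single_sub_single_of_mem_extremePoints, ?_⟩
  rintro ⟨a, b, hab, rfl⟩
  exact single_sub_single_mem_extremePoints hab

theorem exists_apply_sub_apply_eq_of_coordDiam_map (T : (ι → ℝ) →ₗ[ℝ] (ι → ℝ))
    (hT : Bijective T) (hp : ∀ x, coordDiam (T x) = coordDiam x) {i j : ι} (hij : i ≠ j) :
    ∃ a b, a ≠ b ∧ ∀ x, T x i - T x j = x a - x b := by
  have : Nontrivial ι := nontrivial_of_ne i j hij
  let Φ : (ι → ℝ) ≃ₗ[ℝ] (ι → ℝ) := (dotProductEquiv ℝ ι).trans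
    ((LinearEquiv.ofBijective T hT).dualMap.trans (dotProductEquiv ℝ ι).symm)
  have hΦ (f x : ι → ℝ) : Φ f ⬝ᵥ x = f ⬝ᵥ T x := by
    change dotProductEquiv ℝ ι (Φ f) x = _
    simp [Φ]
  have hmem : ∀ f, Φ f ∈ dualBall ι ↔ f ∈ dualBall ι := fun f => by
    rw [mem_dualBall_iff, mem_dualBall_iff]
    conv_rhs => rw [hT.2.forall]
    simp only [hΦ, hp]
  have hB : Φ '' dualBall ι = dualBall ι := Set.ext fun f =>
    ⟨by rintro ⟨g, hg, rfl⟩; exact (hmem g).2 hg,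
      fun hf => ⟨Φ.symm f, (hmem _).1 (by simpa using hf), Φ.apply_symm_apply f⟩⟩
  have hext : Φ (Pi.single i 1 - Pi.single j 1) ∈ (dualBall ι).extremePoints ℝ := by
    rw [← hB, ← image_extremePoints]
    exact Set.mem_image_of_mem _ (single_sub_single_mem_extremePoints hij)
  rw [extremePoints_dualBall] at hext
  obtain ⟨a, b, hab, hΦw⟩ := hext
  refine ⟨a, b, hab, fun x => ?_⟩
  have h := hΦ (Pi.single i 1 - Pi.single j 1) x
  rw [hΦw] at h
  simpa [sub_dotProduct, single_one_dotProduct] using h.symm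

end ExtremePoints

section Combinatorics

theorem exists_forall_eq_or_exists_forall_eq {J α β : Type*} [Nonempty α] (A : J → α)
    (B : J → β) (h : ∀ j k, A j = A k ∨ B j = B k) : (∃ a, ∀ j, A j = a) ∨ ∃ b, ∀ j, B j = b := by
  rcases isEmpty_or_nonempty J with hJ | ⟨⟨j₀⟩⟩
  · exact .inl ⟨Classical.arbitrary α, isEmptyElim⟩
  by_contra! hne
  obtain ⟨j, hj⟩ := hne.1 (A j₀)
  obtain ⟨k, hk⟩ := hne.2 (B j₀)
  rcases h j j₀, h k j₀, h j k with ⟨_ | _, _ | _, _ | _⟩ <;> simp_all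

variable {ι κ : Type*}

theorem eq_or_eq_of_forall_sub_sub_eq {a₁ b₁ a₂ b₂ a₃ b₃ : κ} (h₁ : a₁ ≠ b₁) (h₂ : a₂ ≠ b₂)
    (h : ∀ x : κ → ℝ, (x a₁ - x b₁) - (x a₂ - x b₂) = x a₃ - x b₃) : a₁ = a₂ ∨ b₁ = b₂ := by
  classical
  by_contra! hne
  -- on the indicator of `{a₁, b₂}` the left side is `2`, the right side at most `1`
  have e := h fun m => if m = a₁ ∨ m = b₂ then 1 else 0
  simp only [h₁.symm, hne.1.symm, hne.2, h₂, or_self, true_or, or_true, if_true, if_false] at e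
  split_ifs at e <;> norm_num at e

theorem exists_sign_injective_of_apply_sub_apply_eq [Nonempty κ] (T : (κ → ℝ) →ₗ[ℝ] (ι → ℝ))
    (h : ∀ i j, i ≠ j → ∃ a b, a ≠ b ∧ ∀ x, T x i - T x j = x a - x b) :
    ∃ τ : ℝ, (τ = 1 ∨ τ = -1) ∧ ∃ σ : ι → κ, Injective σ ∧
      ∃ t : (κ → ℝ) →ₗ[ℝ] ℝ, ∀ x i, T x i = τ * x (σ i) + t x := by
  rcases isEmpty_or_nonempty ι with hι | ⟨⟨i₀⟩⟩
  · exact ⟨1, .inl rfl, isEmptyElim, injective_of_subsingleton _, 0, fun _ => isEmptyElim⟩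
  choose! A B hAB hT using h
  have hdich (j k : {j // j ≠ i₀}) : A j i₀ = A k i₀ ∨ B j i₀ = B k i₀ := by
    rcases eq_or_ne j k with rfl | hjk
    · exact .inl rfl
    refine eq_or_eq_of_forall_sub_sub_eq (a₃ := A j k) (b₃ := B j k) (hAB j i₀ j.2)
      (hAB k i₀ k.2) fun x => ?_
    rw [← hT j i₀ j.2, ← hT k i₀ k.2, ← hT j k (Subtype.coe_injective.ne hjk)]
    ring
  have hform : ∃ τ : ℝ, (τ = 1 ∨ τ = -1) ∧
      ∃ t : (κ → ℝ) →ₗ[ℝ] ℝ, ∀ i, ∃ a, ∀ x, T x i = τ * x a + t x := by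
    rcases exists_forall_eq_or_exists_forall_eq _ _ hdich with ⟨a₀, ha₀⟩ | ⟨b₀, hb₀⟩
    · refine ⟨-1, .inr rfl, LinearMap.proj i₀ ∘ₗ T + LinearMap.proj a₀, fun i => ?_⟩
      rcases eq_or_ne i i₀ with rfl | hi
      · exact ⟨a₀, fun x => by simp⟩
      · refine ⟨B i i₀, fun x => ?_⟩
        have := hT i i₀ hi x
        rw [ha₀ ⟨i, hi⟩] at this
        simp only [LinearMap.add_apply, LinearMap.comp_apply, LinearMap.proj_apply]
        linarith
    · refine ⟨1, .inl rfl, LinearMap.proj i₀ ∘ₗ T - LinearMap.proj b₀, fun i => ?_⟩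
      rcases eq_or_ne i i₀ with rfl | hi
      · exact ⟨b₀, fun x => by simp⟩
      · refine ⟨A i i₀, fun x => ?_⟩
        have := hT i i₀ hi x
        rw [hb₀ ⟨i, hi⟩] at this
        simp only [LinearMap.sub_apply, LinearMap.comp_apply, LinearMap.proj_apply]
        linarith
  obtain ⟨τ, hτ, t, ht⟩ := hform
  choose σ hσ using ht
  refine ⟨τ, hτ, σ, fun i j hij => ?_, t, fun x i => hσ i x⟩
  by_contra hne
  classical
  have := hT i j hne (Pi.single (A i j) 1)
  rw [hσ i, hσ j, hij] at this
  simp [Pi.single_apply, hAB i j hne] at this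

end Combinatorics

section Assembly

variable {ι κ : Type*}

theorem coordDiam_eq_of_forall_apply_eq {x y : ι → ℝ} {τ c : ℝ} (hτ : τ = 1 ∨ τ = -1)
    (σ : Equiv.Perm ι) (h : ∀ i, y i = τ * x (σ i) + c) : coordDiam y = coordDiam x := by
  have habs (i j : ι) : |y i - y j| = |x (σ i) - x (σ j)| := by
    rw [h i, h j, add_sub_add_right_eq_sub, ← mul_sub, abs_mul]
    rcases hτ with rfl | rfl <;> simp
  rw [← coordDiam_comp_perm x σ]
  simp only [coordDiam, habs]

theorem apply_one_ne_neg_of_injective [Nonempty κ] {T : (κ → ℝ) →ₗ[ℝ] (ι → ℝ)}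
    (hT : Injective T) {τ : ℝ} {σ : ι → κ} {t : (κ → ℝ) →ₗ[ℝ] ℝ}
    (h : ∀ x i, T x i = τ * x (σ i) + t x) : t (fun _ => 1) ≠ -τ := by
  intro ht
  have hT1 : T (fun _ => 1) = 0 := funext fun i => by simp [h, ht]
  exact one_ne_zero (congrFun (hT (hT1.trans (map_zero T).symm)) (Classical.arbitrary κ))

end Assembly

/-- A nonsingular linear transformation of `ℝⁿ` preserves the maximal distance between
coordinates iff it has the form `(Tx)_i = τ · x_{σ(i)} + t(x)` with `τ = ±1`,
`σ` a permutation and `t` a linear functional with `t(𝟙) ≠ -τ`. -/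
theorem coordinate_diameter_preserving_iff_form_real
    {n : ℕ} (hn : 1 ≤ n)
    (T : (Fin n → ℝ) →ₗ[ℝ] (Fin n → ℝ)) (hbij : Function.Bijective T) :
    (∀ x : Fin n → ℝ,
        (⨆ i, ⨆ j, |T x i - T x j|) = ⨆ i, ⨆ j, |x i - x j|) ↔
      ∃ (τ : ℝ) (σ : Equiv.Perm (Fin n)) (t : (Fin n → ℝ) →ₗ[ℝ] ℝ),
        (τ = 1 ∨ τ = -1) ∧ t (fun _ => 1) ≠ -τ ∧
        ∀ (x : Fin n → ℝ) (i : Fin n), T x i = τ * x (σ i) + t x := by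
  have : Nonempty (Fin n) := ⟨⟨0, hn⟩⟩
  constructor
  · intro hp
    obtain ⟨τ, hτ, σ, hσ, t, ht⟩ := exists_sign_injective_of_apply_sub_apply_eq T
      fun i j hij => exists_apply_sub_apply_eq_of_coordDiam_map T hbij hp hij
    exact ⟨τ, Equiv.ofBijective σ hσ.bijective_of_finite, t, hτ,
      apply_one_ne_neg_of_injective hbij.1 ht, ht⟩
  · rintro ⟨τ, σ, t, hτ, -, ht⟩ x
    exact coordDiam_eq_of_forall_apply_eq hτ σ (ht x)
end

section
/- Let X be a compact Hausdorff topological space with at least two points, let n be a positive integer, and let f₁, …, f_n ∈ C(X,ℂ). Then diam((f₁ + … + f_n)(X)) = diam(f₁(X)) + … + diam(f_n(X)) if and only if there exist points x, y ∈ X with x ≠ y and a complex number v with |v| = 1 such that f_i(x) − f_i(y) = diam(f_i(X))·v for every i = 1, …, n. -/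
/-!
Always `diam (∑ fᵢ)(X) ≤ ∑ diam fᵢ(X)`. If equality holds, pick `x ≠ y` at which the diameter of
the range of the sum is attained; then `‖∑ (fᵢ x - fᵢ y)‖ = ∑ diam fᵢ(X)` while each term has norm at
most `diam fᵢ(X)`. This is the equality case of the triangle inequality, which puts every
`fᵢ x - fᵢ y` on the ray of one unit vector `v`, at distance exactly `diam fᵢ(X)` from the origin.
-/

open Metric Finset Set

theorem Metric.diam_range_sum_le {X E ι : Type*} [SeminormedAddCommGroup E] (s : Finset ι)
    {f : ι → X → E} (hf : ∀ i ∈ s, Bornology.IsBounded (range (f i))) :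
    diam (range (∑ i ∈ s, f i)) ≤ ∑ i ∈ s, diam (range (f i)) := by
  refine diam_le_of_forall_dist_le (sum_nonneg fun _ _ ↦ diam_nonneg) ?_
  rintro _ ⟨p, rfl⟩ _ ⟨q, rfl⟩
  rw [dist_eq_norm, Finset.sum_apply, Finset.sum_apply, ← sum_sub_distrib]
  refine norm_sum_le_of_le s fun i hi ↦ ?_
  rw [← dist_eq_norm]
  exact dist_le_diam_of_mem (hf i hi) (mem_range_self p) (mem_range_self q)

theorem Continuous.exists_dist_eq_diam_range {X α : Type*} [TopologicalSpace X] [CompactSpace X]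
    [Nonempty X] [PseudoMetricSpace α] {g : X → α} (hg : Continuous g) :
    ∃ x y, dist (g x) (g y) = diam (range g) := by
  obtain ⟨x₀⟩ := ‹Nonempty X›
  obtain ⟨⟨x, y⟩, hmax⟩ := (hg.fst'.dist hg.snd').exists_forall_ge' (x₀, x₀) (by simp)
  refine ⟨x, y, le_antisymm ?_ ?_⟩
  · exact dist_le_diam_of_mem (isCompact_range hg).isBounded (mem_range_self x) (mem_range_self y)
  · refine diam_le_of_forall_dist_le dist_nonneg ?_
    rintro _ ⟨p, rfl⟩ _ ⟨q, rfl⟩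
    exact hmax (p, q)

theorem Continuous.exists_ne_dist_eq_diam_range {X α : Type*} [TopologicalSpace X]
    [CompactSpace X] [Nontrivial X] [PseudoMetricSpace α] {g : X → α} (hg : Continuous g) :
    ∃ x y, x ≠ y ∧ dist (g x) (g y) = diam (range g) := by
  obtain ⟨x, y, hxy⟩ := hg.exists_dist_eq_diam_range
  by_cases hne : x = y
  -- then `g` has diameter zero, so any two distinct points will do
  · obtain ⟨x', y', hne'⟩ := exists_pair_ne X
    have hdiam : diam (range g) = 0 := by rw [← hxy, hne, dist_self]
    refine ⟨x', y', hne', le_antisymm ?_ dist_nonneg |>.trans hdiam.symm⟩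
    rw [← hdiam]
    exact dist_le_diam_of_mem (isCompact_range hg).isBounded (mem_range_self x') (mem_range_self y')
  · exact ⟨x, y, hne, hxy⟩

theorem exists_norm_eq_one_eq_smul_of_norm_sum_eq {E ι : Type*} [NormedAddCommGroup E]
    [InnerProductSpace ℝ E] [Nontrivial E] (s : Finset ι) {z : ι → E} {d : ι → ℝ}
    (hz : ∀ i ∈ s, ‖z i‖ ≤ d i) (hsum : ‖∑ i ∈ s, z i‖ = ∑ i ∈ s, d i) :
    ∃ v : E, ‖v‖ = 1 ∧ ∀ i ∈ s, z i = d i • v := by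
  set S := ∑ i ∈ s, z i
  by_cases hS : S = 0
  · obtain ⟨v, hv⟩ := exists_norm_eq E zero_le_one
    have hd : ∀ i ∈ s, d i = 0 := by
      rw [hS, norm_zero, eq_comm] at hsum
      exact (sum_eq_zero_iff_of_nonneg fun i hi ↦ (norm_nonneg _).trans (hz i hi)).mp hsum
    refine ⟨v, hv, fun i hi ↦ ?_⟩
    rw [hd i hi, zero_smul, ← norm_le_zero_iff, ← hd i hi]
    exact hz i hi
  -- test every `zᵢ` against the unit vector along the sum: `⟪zᵢ, v⟫ ≤ dᵢ`, with equality in total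
  set v : E := ‖S‖⁻¹ • S
  have hv : ‖v‖ = 1 := norm_smul_inv_norm (𝕜 := ℝ) hS
  have hinner_le : ∀ i ∈ s, inner ℝ (z i) v ≤ d i := fun i hi ↦
    (real_inner_le_norm _ _).trans (by rw [hv, mul_one]; exact hz i hi)
  have hinner_sum : ∑ i ∈ s, inner ℝ (z i) v = ∑ i ∈ s, d i := by
    rw [← sum_inner, real_inner_smul_right, real_inner_self_eq_norm_sq, ← hsum, sq,
      inv_mul_cancel_left₀ (norm_ne_zero_iff.mpr hS)]
  refine ⟨v, hv, fun i hi ↦ ?_⟩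
  have hinner : inner ℝ (z i) v = d i := (sum_eq_sum_iff_of_le hinner_le).mp hinner_sum i hi
  have hnorm : ‖z i‖ = d i :=
    le_antisymm (hz i hi) (by simpa [hv, hinner] using real_inner_le_norm (z i) v)
  have hray := inner_eq_norm_mul_iff_real.mp (by rw [hinner, hv, mul_one, hnorm])
  rwa [hv, one_smul, hnorm] at hray

theorem diam_sum_eq_sum_diam_iff_general
    {X : Type*} [TopologicalSpace X] [CompactSpace X] [Nontrivial X]
    {n : ℕ} (f : Fin n → C(X, ℂ)) :
    Metric.diam (Set.range ⇑(∑ i, f i)) = ∑ i, Metric.diam (Set.range ⇑(f i)) ↔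
      ∃ (x y : X) (v : ℂ), x ≠ y ∧ ‖v‖ = 1 ∧
        ∀ i, f i x - f i y = (Metric.diam (Set.range ⇑(f i)) : ℂ) * v := by
  have hbdd : ∀ i, Bornology.IsBounded (range (f i)) :=
    fun i ↦ (isCompact_range (f i).continuous).isBounded
  have hdist : ∀ i x y, ‖f i x - f i y‖ ≤ diam (range (f i)) := fun i x y ↦
    dist_eq_norm (f i x) (f i y) ▸ dist_le_diam_of_mem (hbdd i) (mem_range_self x) (mem_range_self y)
  have hsum_apply : ∀ x y, (∑ i, f i) x - (∑ i, f i) y = ∑ i, (f i x - f i y) := fun x y ↦ by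
    simp only [ContinuousMap.sum_apply, sum_sub_distrib]
  have hle : diam (range ⇑(∑ i, f i)) ≤ ∑ i, diam (range (f i)) := by
    rw [ContinuousMap.coe_sum]
    exact diam_range_sum_le univ fun i _ ↦ hbdd i
  constructor
  · intro h
    obtain ⟨x, y, hxy, hdiam⟩ := (∑ i, f i).continuous.exists_ne_dist_eq_diam_range
    rw [h, dist_eq_norm, hsum_apply] at hdiam
    obtain ⟨v, hv, hray⟩ :=
      exists_norm_eq_one_eq_smul_of_norm_sum_eq univ (fun i _ ↦ hdist i x y) hdiam
    exact ⟨x, y, v, hxy, hv, fun i ↦ by rw [hray i (mem_univ i), Complex.real_smul]⟩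
  · rintro ⟨x, y, v, -, hv, hray⟩
    refine le_antisymm hle ?_
    calc ∑ i, diam (range (f i))
        = ‖(∑ i, f i) x - (∑ i, f i) y‖ := by
          rw [hsum_apply, sum_congr rfl fun i _ ↦ hray i, ← sum_mul, norm_mul, hv, mul_one,
            ← Complex.ofReal_sum, Complex.norm_of_nonneg (sum_nonneg fun _ _ ↦ diam_nonneg)]
      _ ≤ diam (range ⇑(∑ i, f i)) := by
          rw [← dist_eq_norm]
          exact dist_le_diam_of_mem (isCompact_range (∑ i, f i).continuous).isBounded
            (mem_range_self x) (mem_range_self y)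

/-- For continuous functions `f₁, …, f_n` on a compact Hausdorff space `X` with at least
two points, the diameter of the range of the sum equals the sum of the diameters of the
ranges iff there are `x ≠ y` and a unimodular `v` with `fᵢ(x) - fᵢ(y) = diam(fᵢ(X)) · v`
for all `i`. -/
theorem diam_sum_eq_sum_diam_iff
    {X : Type*} [TopologicalSpace X] [CompactSpace X] [T2Space X] [Nontrivial X]
    {n : ℕ} (hn : 1 ≤ n) (f : Fin n → C(X, ℂ)) :
    Metric.diam (Set.range ⇑(∑ i, f i)) = ∑ i, Metric.diam (Set.range ⇑(f i)) ↔
      ∃ (x y : X) (v : ℂ), x ≠ y ∧ ‖v‖ = 1 ∧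
        ∀ i, f i x - f i y = (Metric.diam (Set.range ⇑(f i)) : ℂ) * v :=
  diam_sum_eq_sum_diam_iff_general f
end

section
/- Let X be a first countable compact Hausdorff topological space with at least three points and let φ : C(X,ℂ) → C(X,ℂ) be a diameter preserving linear bijection. Then for every pair of points x, y ∈ X with x ≠ y, the set G({x,y}) = ⋂{ S(φ(f)) : f ∈ C(X,ℂ), {x,y} ∈ S(f) } is nonempty. -/
/-- `S(f)`: the set of two-element subsets `{x,y}` of `X` with
`|f(x) - f(y)| = diam(f(X))`. -/
def diamSet {X : Type*} [TopologicalSpace X] (f : C(X, ℂ)) : Set (Set X) :=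
  {s | ∃ x y : X, x ≠ y ∧ s = {x, y} ∧
    ‖f x - f y‖ = Metric.diam (Set.range ⇑f)}

/-- `T(f)`: the set of triples `(x,y,u)` with `|f(x) - f(y)| = diam(f(X))` and
`u = f(x) - f(y)`. -/
def diamTriple {X : Type*} [TopologicalSpace X] (f : C(X, ℂ)) : Set (X × X × ℂ) :=
  {p | ‖f p.1 - f p.2.1‖ = Metric.diam (Set.range ⇑f) ∧
    p.2.2 = f p.1 - f p.2.1}

/-- `G(s) = ⋂ { S(φ(f)) : f ∈ C(X,ℂ), s ∈ S(f) }`. -/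
def Gset {X : Type*} [TopologicalSpace X] (φ : C(X, ℂ) → C(X, ℂ)) (s : Set X) :
    Set (Set X) :=
  {t | ∀ f : C(X, ℂ), s ∈ diamSet f → t ∈ diamSet (φ f)}

/-- `H(x,y,u) = ⋂ { T(φ(f)) : f ∈ C(X,ℂ), (x,y,u) ∈ T(f) }`. -/
def Hset {X : Type*} [TopologicalSpace X] (φ : C(X, ℂ) → C(X, ℂ)) (x y : X) (u : ℂ) :
    Set (X × X × ℂ) :=
  {p | ∀ f : C(X, ℂ), (x, y, u) ∈ diamTriple f → p ∈ diamTriple (φ f)}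

/-- `φ` is diameter preserving: `diam(φ(f)(X)) = diam(f(X))` for all `f`. -/
def DiamPreserving {X : Type*} [TopologicalSpace X] (φ : C(X, ℂ) → C(X, ℂ)) : Prop :=
  ∀ f : C(X, ℂ), Metric.diam (Set.range ⇑(φ f)) = Metric.diam (Set.range ⇑f)

/-- The collection of two-element subsets of `X`. -/
abbrev TwoSet (X : Type*) := {s : Set X // ∃ a b : X, a ≠ b ∧ s = {a, b}}

/-!
If `f₁, …, fₙ` all attain their diameters at `(x, y)`, rotating each by a unimodular
`cᵢ` with `cᵢ (fᵢ x - fᵢ y) ≥ 0` makes `g = ∑ cᵢ fᵢ` attain the diameter `∑ diam fᵢ` at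
`(x, y)`. By linearity and diameter preservation, `diam (φ g) = ∑ diam (φ fᵢ)`, so the
triangle inequality forces every pair at which `φ g` attains its diameter to be such a pair
for each `φ fᵢ`. The closed sets of diameter pairs of the `φ f`, over all `f` attaining its
diameter at `(x, y)`, thus have the finite intersection property, and compactness of
`X × X` yields a common pair `(a, b)`. A Urysohn function separating `x` and `y` shows
`a ≠ b`.
-/

open Metric Set

namespace ContinuousMap

variable {X Y 𝕜 E : Type*} [TopologicalSpace X] [TopologicalSpace Y]

/-- Ordered-pair version of `diamSet`; unlike `diamSet f`, it is a closed subset of `X × X`. -/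
def diamPairs [PseudoMetricSpace E] (f : C(X, E)) : Set (X × X) :=
  {p | dist (f p.1) (f p.2) = diam (range f)}

theorem isClosed_diamPairs [PseudoMetricSpace E] (f : C(X, E)) : IsClosed f.diamPairs :=
  isClosed_eq (by fun_prop) continuous_const

theorem pair_mem_diamSet_iff (f : C(X, ℂ)) {x y : X} (hxy : x ≠ y) :
    ({x, y} : Set X) ∈ diamSet f ↔ (x, y) ∈ f.diamPairs := by
  simp only [diamPairs, mem_ofPred_eq, dist_eq_norm]
  constructor
  · rintro ⟨x', y', -, heq, hdiam⟩
    rcases pair_eq_pair_iff.1 heq with ⟨rfl, rfl⟩ | ⟨rfl, rfl⟩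
    · exact hdiam
    · rwa [norm_sub_rev]
  · exact fun hdiam => ⟨x, y, hxy, rfl, hdiam⟩

theorem dist_sum_smul_apply_le [NormedField 𝕜] [SeminormedAddCommGroup E] [NormedSpace 𝕜 E]
    {ι : Type*} (s : Finset ι) (c : ι → 𝕜) (hc : ∀ i ∈ s, ‖c i‖ ≤ 1) (f : ι → C(X, E))
    (a b : X) :
    dist ((∑ i ∈ s, c i • f i) a) ((∑ i ∈ s, c i • f i) b) ≤
      ∑ i ∈ s, dist (f i a) (f i b) := by
  simp only [coe_sum, coe_smul, Finset.sum_apply, Pi.smul_apply]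
  rw [dist_eq_norm, ← Finset.sum_sub_distrib]
  refine (norm_sum_le _ _).trans (Finset.sum_le_sum fun i hi => ?_)
  rw [← smul_sub, norm_smul, dist_eq_norm]
  exact mul_le_of_le_one_left (norm_nonneg _) (hc i hi)

variable [CompactSpace X]

theorem dist_le_diam_range [PseudoMetricSpace E] (f : C(X, E)) (a b : X) :
    dist (f a) (f b) ≤ diam (range f) :=
  dist_le_diam_of_mem (isCompact_range f.continuous).isBounded ⟨a, rfl⟩ ⟨b, rfl⟩

theorem diamPairs_nonempty [PseudoMetricSpace E] [Nonempty X] (f : C(X, E)) :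
    f.diamPairs.Nonempty := by
  obtain ⟨p, -, hp⟩ := isCompact_univ.exists_isMaxOn univ_nonempty
    (show Continuous fun p : X × X => dist (f p.1) (f p.2) by fun_prop).continuousOn
  refine ⟨p, le_antisymm (f.dist_le_diam_range _ _) ?_⟩
  refine diam_le_of_forall_dist_le dist_nonneg ?_
  rintro _ ⟨a, rfl⟩ _ ⟨b, rfl⟩
  exact hp (mem_univ (a, b))

theorem mem_diamPairs_of_diam_range_sum_smul_eq [NormedField 𝕜] [SeminormedAddCommGroup E]
    [NormedSpace 𝕜 E] {ι : Type*} (s : Finset ι) (c : ι → 𝕜) (hc : ∀ i ∈ s, ‖c i‖ ≤ 1)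
    (f : ι → C(X, E)) {p : X × X} (hp : p ∈ (∑ i ∈ s, c i • f i).diamPairs)
    (hdiam : diam (range ⇑(∑ i ∈ s, c i • f i)) = ∑ i ∈ s, diam (range (f i))) :
    ∀ i ∈ s, p ∈ (f i).diamPairs := by
  have hle : ∀ i ∈ s, dist (f i p.1) (f i p.2) ≤ diam (range (f i)) :=
    fun i _ => (f i).dist_le_diam_range _ _
  refine (Finset.sum_eq_sum_iff_of_le hle).1 (le_antisymm (Finset.sum_le_sum hle) ?_)
  calc ∑ i ∈ s, diam (range (f i))
      = dist ((∑ i ∈ s, c i • f i) p.1) ((∑ i ∈ s, c i • f i) p.2) := hdiam ▸ hp.symm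
    _ ≤ ∑ i ∈ s, dist (f i p.1) (f i p.2) := dist_sum_smul_apply_le s c hc f _ _

theorem diam_range_sum_smul_eq [RCLike 𝕜] {ι : Type*} (s : Finset ι) (c : ι → 𝕜)
    (hc : ∀ i ∈ s, ‖c i‖ ≤ 1) (f : ι → C(X, 𝕜)) {x y : X}
    (hxy : ∀ i ∈ s, (x, y) ∈ (f i).diamPairs)
    (hrot : ∀ i ∈ s, (‖f i x - f i y‖ : 𝕜) = c i * (f i x - f i y)) :
    diam (range ⇑(∑ i ∈ s, c i • f i)) = ∑ i ∈ s, diam (range (f i)) := by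
  set g := ∑ i ∈ s, c i • f i
  have hsum_nonneg : 0 ≤ ∑ i ∈ s, diam (range (f i)) := Finset.sum_nonneg fun _ _ => diam_nonneg
  have hgxy : g x - g y = ((∑ i ∈ s, diam (range (f i)) : ℝ) : 𝕜) := by
    simp only [g, coe_sum, coe_smul, Finset.sum_apply, Pi.smul_apply, smul_eq_mul,
      ← Finset.sum_sub_distrib, ← mul_sub, RCLike.ofReal_sum]
    refine Finset.sum_congr rfl fun i hi => ?_
    rw [← hrot i hi, ← dist_eq_norm, hxy i hi]
  refine le_antisymm (diam_le_of_forall_dist_le hsum_nonneg ?_) ?_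
  · rintro _ ⟨a, rfl⟩ _ ⟨b, rfl⟩
    exact (dist_sum_smul_apply_le s c hc f a b).trans
      (Finset.sum_le_sum fun i _ => (f i).dist_le_diam_range a b)
  · calc ∑ i ∈ s, diam (range (f i)) = dist (g x) (g y) := by
          rw [dist_eq_norm, hgxy, RCLike.norm_ofReal, abs_of_nonneg hsum_nonneg]
      _ ≤ diam (range g) := g.dist_le_diam_range x y

theorem nonempty_iInter_diamPairs_map [RCLike 𝕜] [CompactSpace Y] [Nonempty Y]
    (φ : C(X, 𝕜) →ₗ[𝕜] C(Y, 𝕜)) (hφ : ∀ f, diam (range (φ f)) = diam (range f)) (x y : X) :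
    (⋂ f : {f : C(X, 𝕜) // (x, y) ∈ f.diamPairs}, (φ f).diamPairs).Nonempty := by
  refine CompactSpace.iInter_nonempty (fun f => isClosed_diamPairs _) fun s => ?_
  choose c hc hrot using fun f : {f : C(X, 𝕜) // (x, y) ∈ f.diamPairs} =>
    RCLike.exists_norm_eq_mul_self (f.1 x - f.1 y)
  have hc' : ∀ f ∈ s, ‖c f‖ ≤ 1 := fun f _ => (hc f).le
  have hg := diam_range_sum_smul_eq s c hc' (fun f => f.1) (fun f _ => f.2) fun f _ => hrot f
  have hφg : φ (∑ f ∈ s, c f • f.1) = ∑ f ∈ s, c f • φ f := by simp only [map_sum, map_smul]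
  obtain ⟨p, hp⟩ := (φ (∑ f ∈ s, c f • f.1)).diamPairs_nonempty
  rw [hφg] at hp
  refine ⟨p, mem_iInter₂.2 (mem_diamPairs_of_diam_range_sum_smul_eq s c hc' _ hp ?_)⟩
  rw [← hφg, hφ, hg]
  exact Finset.sum_congr rfl fun f _ => (hφ f).symm

theorem exists_mem_diamPairs_diam_range_eq_one [RCLike 𝕜] [T2Space X] {x y : X}
    (hxy : x ≠ y) : ∃ f : C(X, 𝕜), (x, y) ∈ f.diamPairs ∧ diam (range f) = 1 := by
  obtain ⟨u, hux, huy, hu01⟩ := exists_continuous_zero_one_of_isClosed isClosed_singleton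
    isClosed_singleton (disjoint_singleton.2 hxy)
  let f : C(X, 𝕜) := (⟨((↑) : ℝ → 𝕜), RCLike.continuous_ofReal⟩ : C(ℝ, 𝕜)).comp u
  have hdist : ∀ a b, dist (f a) (f b) = dist (u a) (u b) := fun a b => by
    rw [dist_eq_norm, Real.dist_eq, ← RCLike.norm_ofReal (K := 𝕜), RCLike.ofReal_sub]
    rfl
  have hxy1 : dist (f x) (f y) = 1 := by
    simp [hdist, hux rfl, huy rfl]
  have hdiam : diam (range f) = 1 := by
    refine le_antisymm (diam_le_of_forall_dist_le zero_le_one ?_) (hxy1 ▸ f.dist_le_diam_range x y)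
    rintro _ ⟨a, rfl⟩ _ ⟨b, rfl⟩
    exact hdist a b ▸ Real.dist_le_of_mem_Icc_01 (hu01 a) (hu01 b)
  exact ⟨f, hxy1.trans hdiam.symm, hdiam⟩

end ContinuousMap

theorem Gset_nonempty_general
    {X : Type*} [TopologicalSpace X] [CompactSpace X] [T2Space X]
    (φ : C(X, ℂ) →ₗ[ℂ] C(X, ℂ))
    (hdp : DiamPreserving (⇑φ)) (x y : X) (hxy : x ≠ y) :
    (Gset (⇑φ) ({x, y} : Set X)).Nonempty := by
  have : Nonempty X := ⟨x⟩
  obtain ⟨p, hp⟩ := ContinuousMap.nonempty_iInter_diamPairs_map φ hdp x y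
  rw [mem_iInter] at hp
  obtain ⟨f₀, hf₀, hdiam₀⟩ :=
    ContinuousMap.exists_mem_diamPairs_diam_range_eq_one (𝕜 := ℂ) hxy
  have hp_ne : p.1 ≠ p.2 := by
    intro h
    have h₀ : dist (φ f₀ p.1) (φ f₀ p.2) = diam (range (φ f₀)) := hp ⟨f₀, hf₀⟩
    rw [h, dist_self, hdp, hdiam₀] at h₀
    exact zero_ne_one h₀
  exact ⟨{p.1, p.2}, fun f hf =>
    ((φ f).pair_mem_diamSet_iff hp_ne).2 (hp ⟨f, (f.pair_mem_diamSet_iff hxy).1 hf⟩)⟩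

/-- Step 1 (first part): for a diameter preserving linear bijection of `C(X,ℂ)` on a
first countable compact Hausdorff space with at least three points, the set
`G({x,y})` is nonempty for every pair `x ≠ y`. -/
theorem Gset_nonempty
    {X : Type*} [TopologicalSpace X] [CompactSpace X] [T2Space X]
    [FirstCountableTopology X]
    (h3 : ∃ a b c : X, a ≠ b ∧ a ≠ c ∧ b ≠ c)
    (φ : C(X, ℂ) →ₗ[ℂ] C(X, ℂ)) (hbij : Function.Bijective φ)
    (hdp : DiamPreserving (⇑φ)) (x y : X) (hxy : x ≠ y) :
    (Gset (⇑φ) ({x, y} : Set X)).Nonempty :=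
  Gset_nonempty_general φ hdp x y hxy
end

section
/- Let X be a first countable compact Hausdorff topological space with at least three points and let φ : C(X,ℂ) → C(X,ℂ) be a diameter preserving linear bijection. If {x₁,y₁} and {x₂,y₂} are two distinct two-element subsets of X, then G({x₁,y₁}) ∩ G({x₂,y₂}) = ∅. -/
/-!
After relabelling, `x₂ ∉ {x₁, y₁}` and `x₁ ≠ y₂`. Suppose `{a, b} ∈ G({x₁, y₁}) ∩ G({x₂, y₂})`.
By Urysohn's lemma there are real functions `0 ≤ k ≤ f ≤ 1` with `f = 1` on `{x₁, x₂}`,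
`f = 0` on `{y₁, y₂}`, `k(x₁) = 1` and `k(x₂) = 0`. Then `f`, `k` and `f + k` attain their
diameters `1, 1, 2` on `{x₁, y₁}`, and `f - k` attains its diameter `1` on `{x₂, y₂}`. Hence
`A = φf(a) - φf(b)` and `B = φk(a) - φk(b)` satisfy `|A| = |B| = |A - B| = 1` and `|A + B| = 2`,
which violates the parallelogram law.
-/

section

open Set Metric

variable {X : Type*} [TopologicalSpace X]

lemma norm_sub_eq_diam_of_pair_mem_diamSet {g : C(X, ℂ)} {a b : X}
    (h : ({a, b} : Set X) ∈ diamSet g) : ‖g a - g b‖ = diam (range g) := by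
  obtain ⟨x, y, -, hxy, hdiam⟩ := h
  rcases pair_eq_pair_iff.mp hxy with ⟨rfl, rfl⟩ | ⟨rfl, rfl⟩
  · exact hdiam
  · rwa [norm_sub_rev]

lemma diam_add_sq_add_diam_sub_sq {u v : C(X, ℂ)} {s : Set X}
    (hu : s ∈ diamSet u) (hv : s ∈ diamSet v) (hadd : s ∈ diamSet (u + v))
    (hsub : s ∈ diamSet (u - v)) :
    diam (range (u + v)) ^ 2 + diam (range (u - v)) ^ 2 =
      2 * (diam (range u) ^ 2 + diam (range v) ^ 2) := by
  obtain ⟨a, b, -, rfl, hu⟩ := hu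
  rw [← hu, ← norm_sub_eq_diam_of_pair_mem_diamSet hv,
    ← norm_sub_eq_diam_of_pair_mem_diamSet hadd, ← norm_sub_eq_diam_of_pair_mem_diamSet hsub]
  simp only [ContinuousMap.add_apply, ContinuousMap.sub_apply]
  rw [add_sub_add_comm, sub_sub_sub_comm]
  linear_combination parallelogram_law_with_norm ℝ (u a - u b) (v a - v b)

noncomputable def realToComplex : C(X, ℝ) →ₐ[ℝ] C(X, ℂ) :=
  Complex.ofRealAm.compLeftContinuous ℝ Complex.continuous_ofReal

@[simp]
lemma realToComplex_apply (r : C(X, ℝ)) (x : X) : realToComplex r x = r x := rfl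

lemma diam_range_eq_of_forall_mem_Icc {r : C(X, ℝ)} {p q : X}
    (hr : ∀ x, r x ∈ Icc (r q) (r p)) : diam (range r) = r p - r q := by
  have hsub : range r ⊆ Icc (r q) (r p) := range_subset_iff.mpr hr
  apply le_antisymm
  · rw [← Real.diam_Icc (hr q).2]
    exact diam_mono hsub (isBounded_Icc _ _)
  · calc r p - r q = dist (r p) (r q) := by
          rw [Real.dist_eq, abs_of_nonneg (sub_nonneg.mpr (hr q).2)]
      _ ≤ diam (range r) :=
          dist_le_diam_of_mem (isBounded_Icc _ _ |>.subset hsub) (mem_range_self p)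
            (mem_range_self q)

lemma diam_range_realToComplex (r : C(X, ℝ)) :
    diam (range (realToComplex r)) = diam (range r) := by
  rw [← Complex.isometry_ofReal.diam_image, ← range_comp]
  rfl

lemma diam_range_realToComplex_eq_of_forall_mem_Icc {r : C(X, ℝ)} {p q : X}
    (hr : ∀ x, r x ∈ Icc (r q) (r p)) : diam (range (realToComplex r)) = r p - r q := by
  rw [diam_range_realToComplex, diam_range_eq_of_forall_mem_Icc hr]

lemma pair_mem_diamSet_realToComplex {r : C(X, ℝ)} {p q : X} (hpq : p ≠ q)
    (hr : ∀ x, r x ∈ Icc (r q) (r p)) : ({p, q} : Set X) ∈ diamSet (realToComplex r) := by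
  refine ⟨p, q, hpq, rfl, ?_⟩
  rw [diam_range_realToComplex_eq_of_forall_mem_Icc hr, realToComplex_apply, realToComplex_apply,
    ← Complex.ofReal_sub, Complex.norm_real, Real.norm_eq_abs,
    abs_of_nonneg (sub_nonneg.mpr (hr q).2)]

lemma exists_urysohn_pair_le [NormalSpace X] [T1Space X] {x₁ y₁ x₂ y₂ : X}
    (h₁ : x₁ ≠ y₁) (h₂ : x₂ ≠ y₂) (hx₂ : x₂ ∉ ({x₁, y₁} : Set X)) (hx₁ : x₁ ≠ y₂) :
    ∃ f k : C(X, ℝ), (∀ x, 0 ≤ k x ∧ k x ≤ f x ∧ f x ≤ 1) ∧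
      f x₁ = 1 ∧ f x₂ = 1 ∧ f y₁ = 0 ∧ f y₂ = 0 ∧ k x₁ = 1 ∧ k x₂ = 0 := by
  have hx₂' : x₂ ≠ x₁ ∧ x₂ ≠ y₁ := by simpa using hx₂
  obtain ⟨f, hf₀, hf₁, hf⟩ := exists_continuous_zero_one_of_isClosed
    (toFinite {y₁, y₂}).isClosed (toFinite {x₁, x₂}).isClosed
    (by simp [h₁, h₂, hx₁, hx₂'.2])
  obtain ⟨l, hl₀, hl₁, hl⟩ := exists_continuous_zero_one_of_isClosed
    isClosed_singleton isClosed_singleton (disjoint_singleton.mpr hx₂'.1)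
  refine ⟨f, f * l, fun x => ⟨mul_nonneg (hf x).1 (hl x).1,
    mul_le_of_le_one_right (hf x).1 (hl x).2, (hf x).2⟩, ?_⟩
  have hfx₁ : f x₁ = 1 := hf₁ (mem_insert _ _)
  have hfx₂ : f x₂ = 1 := hf₁ (mem_insert_of_mem _ rfl)
  have hlx₁ : l x₁ = 1 := hl₁ rfl
  have hlx₂ : l x₂ = 0 := hl₀ rfl
  exact ⟨hfx₁, hfx₂, hf₀ (mem_insert _ _), hf₀ (mem_insert_of_mem _ rfl),
    by simp [hfx₁, hlx₁], by simp [hlx₂]⟩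

lemma Gset_inter_Gset_eq_empty_of_notMem_of_ne [NormalSpace X] [T1Space X]
    (φ : C(X, ℂ) →+ C(X, ℂ)) (hdp : DiamPreserving φ) {x₁ y₁ x₂ y₂ : X}
    (h₁ : x₁ ≠ y₁) (h₂ : x₂ ≠ y₂) (hx₂ : x₂ ∉ ({x₁, y₁} : Set X)) (hx₁ : x₁ ≠ y₂) :
    Gset φ {x₁, y₁} ∩ Gset φ {x₂, y₂} = ∅ := by
  obtain ⟨f, k, hkf, hfx₁, hfx₂, hfy₁, hfy₂, hkx₁, hkx₂⟩ :=
    exists_urysohn_pair_le h₁ h₂ hx₂ hx₁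
  have hky₁ : k y₁ = 0 := le_antisymm (hfy₁ ▸ (hkf y₁).2.1) (hkf y₁).1
  have hky₂ : k y₂ = 0 := le_antisymm (hfy₂ ▸ (hkf y₂).2.1) (hkf y₂).1
  have hf : ∀ x, f x ∈ Icc (f y₁) (f x₁) := fun x => by
    have := hkf x; rw [hfy₁, hfx₁]; constructor <;> linarith
  have hk : ∀ x, k x ∈ Icc (k y₁) (k x₁) := fun x => by
    have := hkf x; rw [hky₁, hkx₁]; constructor <;> linarith
  have hadd : ∀ x, (f + k) x ∈ Icc ((f + k) y₁) ((f + k) x₁) := fun x => by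
    have := hkf x; simp only [ContinuousMap.add_apply, hfy₁, hky₁, hfx₁, hkx₁]
    constructor <;> linarith
  have hsub : ∀ x, (f - k) x ∈ Icc ((f - k) y₂) ((f - k) x₂) := fun x => by
    have := hkf x; simp only [ContinuousMap.sub_apply, hfy₂, hky₂, hfx₂, hkx₂]
    constructor <;> linarith
  refine eq_empty_of_forall_notMem fun t ⟨ht₁, ht₂⟩ => ?_
  have key := diam_add_sq_add_diam_sub_sq
    (ht₁ _ (pair_mem_diamSet_realToComplex h₁ hf))
    (ht₁ _ (pair_mem_diamSet_realToComplex h₁ hk))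
    (map_add φ _ _ ▸ map_add realToComplex f k ▸ ht₁ _ (pair_mem_diamSet_realToComplex h₁ hadd))
    (map_sub φ _ _ ▸ map_sub realToComplex f k ▸ ht₂ _ (pair_mem_diamSet_realToComplex h₂ hsub))
  rw [← map_add, ← map_sub, hdp, hdp, hdp, hdp, ← map_add, ← map_sub,
    diam_range_realToComplex_eq_of_forall_mem_Icc hf,
    diam_range_realToComplex_eq_of_forall_mem_Icc hk,
    diam_range_realToComplex_eq_of_forall_mem_Icc hadd,
    diam_range_realToComplex_eq_of_forall_mem_Icc hsub] at key
  simp only [ContinuousMap.add_apply, ContinuousMap.sub_apply, hfx₁, hfx₂, hfy₁, hfy₂, hkx₁,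
    hkx₂, hky₁, hky₂] at key
  norm_num at key

lemma Gset_inter_Gset_eq_empty_of_notMem [NormalSpace X] [T1Space X]
    (φ : C(X, ℂ) →+ C(X, ℂ)) (hdp : DiamPreserving φ) {x₁ y₁ x₂ y₂ : X}
    (h₁ : x₁ ≠ y₁) (h₂ : x₂ ≠ y₂) (hx₂ : x₂ ∉ ({x₁, y₁} : Set X)) :
    Gset φ {x₁, y₁} ∩ Gset φ {x₂, y₂} = ∅ := by
  by_cases hx₁ : x₁ = y₂
  · subst hx₁
    rw [pair_comm x₁ y₁]
    exact Gset_inter_Gset_eq_empty_of_notMem_of_ne φ hdp h₁.symm h₂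
      (by rwa [pair_comm]) h₁.symm
  · exact Gset_inter_Gset_eq_empty_of_notMem_of_ne φ hdp h₁ h₂ hx₂ hx₁

end

theorem Gset_disjoint_of_ne_general
    {X : Type*} [TopologicalSpace X] [CompactSpace X] [T2Space X]
    (φ : C(X, ℂ) →ₗ[ℂ] C(X, ℂ))
    (hdp : DiamPreserving (⇑φ))
    (x₁ y₁ x₂ y₂ : X) (h₁ : x₁ ≠ y₁) (h₂ : x₂ ≠ y₂)
    (hne : ({x₁, y₁} : Set X) ≠ {x₂, y₂}) :
    Gset (⇑φ) ({x₁, y₁} : Set X) ∩ Gset (⇑φ) ({x₂, y₂} : Set X) = ∅ := by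
  have hout : x₂ ∉ ({x₁, y₁} : Set X) ∨ y₂ ∉ ({x₁, y₁} : Set X) := by
    by_contra! hin
    have hsub : ({x₂, y₂} : Set X) ⊆ {x₁, y₁} :=
      Set.insert_subset hin.1 (Set.singleton_subset_iff.mpr hin.2)
    exact hne (Set.eq_of_subset_of_ncard_le hsub
      (by rw [Set.ncard_pair h₁, Set.ncard_pair h₂])).symm
  rcases hout with hx₂ | hy₂
  · exact Gset_inter_Gset_eq_empty_of_notMem φ.toAddMonoidHom hdp h₁ h₂ hx₂
  · rw [Set.pair_comm x₂ y₂]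
    exact Gset_inter_Gset_eq_empty_of_notMem φ.toAddMonoidHom hdp h₁ h₂.symm hy₂

/-- Step 2: distinct two-element subsets have disjoint `G`-sets. -/
theorem Gset_disjoint_of_ne
    {X : Type*} [TopologicalSpace X] [CompactSpace X] [T2Space X]
    [FirstCountableTopology X]
    (h3 : ∃ a b c : X, a ≠ b ∧ a ≠ c ∧ b ≠ c)
    (φ : C(X, ℂ) →ₗ[ℂ] C(X, ℂ)) (hbij : Function.Bijective φ)
    (hdp : DiamPreserving (⇑φ))
    (x₁ y₁ x₂ y₂ : X) (h₁ : x₁ ≠ y₁) (h₂ : x₂ ≠ y₂)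
    (hne : ({x₁, y₁} : Set X) ≠ {x₂, y₂}) :
    Gset (⇑φ) ({x₁, y₁} : Set X) ∩ Gset (⇑φ) ({x₂, y₂} : Set X) = ∅ :=
  Gset_disjoint_of_ne_general φ hdp x₁ y₁ x₂ y₂ h₁ h₂ hne
end

section
/- Let X be a first countable compact Hausdorff topological space with at least three points, let φ : C(X,ℂ) → C(X,ℂ) be a diameter preserving linear bijection, and let G' be the bijection of the collection of two-element subsets of X determined by G({x,y}) = {G'({x,y})}. If {x₁,y₁} and {x₂,y₂} are two-element subsets of X with {x₁,y₁} ∩ {x₂,y₂} ≠ ∅, then G'({x₁,y₁}) ∩ G'({x₂,y₂}) ≠ ∅; moreover, if {x₁,y₁} and {x₂,y₂} have exactly one element in common, then G'({x₁,y₁}) and G'({x₂,y₂}) have exactly one element in common. -/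
/-!
If `G'{x, y} = {a, b}`, then whenever `{x, y} ∈ S(f)` the difference `φ f a - φ f b` is a fixed
unimodular multiple `α (f x - f y)`: on the convex set of functions normalised by
`f x - f y = 1 = diam f(X)` the values `φ f a - φ f b` have modulus one, and strict convexity of `ℂ`
makes them constant. A Cantor intersection argument applied to `φ⁻¹`, together with injectivity of
`G'`, gives conversely `{x, y} ∈ S(φ⁻¹ g)` whenever `{a, b} ∈ S(g)`.

If `G'{x, y} = {a, b}` and `G'{x, z} = {c, d}` (phases `α`, `β`) were disjoint, a function `g` of
diameter one with `g a - g b = α` and `g c - g d = -β` would give `f = φ⁻¹ g` with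
`f x - f y = 1` and `f x - f z = -1`, so `|f y - f z| = 2 > diam f(X)`. A second common point of
the images would make them equal, and then `G'` injective makes the original pairs equal.
-/

open Set Metric

theorem eq_of_convex_of_norm_eq {V E : Type*} [AddCommGroup V] [Module ℝ V]
    [NormedAddCommGroup E] [NormedSpace ℝ E] [StrictConvexSpace ℝ E] (L : V →ₗ[ℝ] E)
    {K : Set V} (hK : Convex ℝ K) {r : ℝ} (hL : ∀ f ∈ K, ‖L f‖ = r) {f g : V}
    (hf : f ∈ K) (hg : g ∈ K) : L f = L g := by
  have hmid := hL _ (hK hf hg (by norm_num : (0 : ℝ) ≤ 2⁻¹) (by norm_num : (0 : ℝ) ≤ 2⁻¹)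
    (by norm_num))
  rw [map_add, map_smul, map_smul, ← smul_add, norm_smul, Real.norm_of_nonneg (by norm_num)]
    at hmid
  refine eq_of_norm_eq_of_norm_add_eq ((hL f hf).trans (hL g hg).symm) ?_
  rw [hL f hf, hL g hg]
  linarith

theorem norm_eq_of_norm_midpoint_eq {E : Type*} [SeminormedAddCommGroup E] [NormedSpace ℝ E]
    {u v : E} {r : ℝ} (hu : ‖u‖ ≤ r) (hv : ‖v‖ ≤ r)
    (h : ‖(2⁻¹ : ℝ) • u + (2⁻¹ : ℝ) • v‖ = r) : ‖u‖ = r ∧ ‖v‖ = r := by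
  have := h ▸ norm_add_le ((2⁻¹ : ℝ) • u) ((2⁻¹ : ℝ) • v)
  rw [norm_smul, norm_smul, Real.norm_of_nonneg (by norm_num)] at this
  constructor <;> linarith

theorem diam_range_le_of_forall_mem_closedBall {ι E : Type*} [PseudoMetricSpace E]
    {g : ι → E} {c : E} {r : ℝ} (hr : 0 ≤ r) (hg : ∀ i, g i ∈ closedBall c r) :
    diam (range g) ≤ 2 * r :=
  (diam_mono (range_subset_iff.2 hg) isBounded_closedBall).trans (diam_closedBall hr)

theorem pair_eq_of_mem_of_mem {X : Type*} {a b z₁ z₂ : X} (hz : z₁ ≠ z₂)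
    (h₁ : z₁ ∈ ({a, b} : Set X)) (h₂ : z₂ ∈ ({a, b} : Set X)) :
    ({z₁, z₂} : Set X) = {a, b} := by
  rcases h₁ with rfl | rfl <;> rcases h₂ with rfl | rfl <;> simp_all [Set.pair_comm]

theorem TwoSet.exists_eq_pair_of_mem {X : Type*} (p : TwoSet X) {x : X} (hx : x ∈ p.val) :
    ∃ y, x ≠ y ∧ p.val = {x, y} := by
  obtain ⟨a, b, hab, hp⟩ := p.2
  rw [hp] at hx ⊢
  rcases hx with rfl | rfl
  · exact ⟨b, hab, rfl⟩
  · exact ⟨a, hab.symm, pair_comm a x⟩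

theorem TwoSet.eq_of_mem_inter {X : Type*} {p q : TwoSet X} {z₁ z₂ : X} (hz : z₁ ≠ z₂)
    (h₁ : z₁ ∈ p.val ∩ q.val) (h₂ : z₂ ∈ p.val ∩ q.val) : p = q := by
  obtain ⟨a, b, -, hp⟩ := p.2
  obtain ⟨c, d, -, hq⟩ := q.2
  rw [hp, hq] at h₁ h₂
  refine Subtype.ext ?_
  rw [hp, hq, ← pair_eq_of_mem_of_mem hz h₁.1 h₂.1, pair_eq_of_mem_of_mem hz h₁.2 h₂.2]

theorem exists_continuousMap_eqOn_of_finite {X : Type*} [TopologicalSpace X] [NormalSpace X]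
    [T1Space X] {S : Set X} (hS : S.Finite) (v : X → ℂ) (c : ℂ) {r : ℝ} (hr : 0 < r)
    (hv : ∀ x ∈ S, v x ∈ closedBall c r) :
    ∃ g : C(X, ℂ), EqOn g v S ∧ ∀ x, g x ∈ closedBall c r := by
  have : Finite S := hS.to_subtype
  have := Metric.instTietzeExtensionClosedBall ℂ c hr
  obtain ⟨g, hg, hgS⟩ := ContinuousMap.exists_forall_mem_restrict_eq hS.isClosed
    ⟨fun x => v x, continuous_of_discreteTopology⟩ (fun x => hv x x.2)
  exact ⟨g, fun x hx => congr($hgS ⟨x, hx⟩), hg⟩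

section

variable {X : Type*} [TopologicalSpace X]

theorem norm_sub_eq_diam_of_mem_diamSet {f : C(X, ℂ)} {a b : X}
    (h : ({a, b} : Set X) ∈ diamSet f) : ‖f a - f b‖ = diam (range f) := by
  obtain ⟨x, y, -, hxy, hf⟩ := h
  rcases Set.pair_eq_pair_iff.1 hxy with ⟨rfl, rfl⟩ | ⟨rfl, rfl⟩
  · exact hf
  · rwa [norm_sub_rev]

theorem diam_range_smul (c : ℂ) (f : C(X, ℂ)) :
    diam (range (c • f)) = ‖c‖ * diam (range f) := by
  rw [← diam_smul₀, ← Set.range_smul]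
  rfl

theorem diamSet_smul {c : ℂ} (hc : c ≠ 0) (f : C(X, ℂ)) : diamSet (c • f) = diamSet f := by
  ext s
  refine exists₂_congr fun x y => and_congr_right' <| and_congr_right' ?_
  rw [diam_range_smul, ContinuousMap.smul_apply, ContinuousMap.smul_apply, smul_eq_mul,
    smul_eq_mul, ← mul_sub, norm_mul]
  exact mul_right_inj' (norm_ne_zero_iff.2 hc)

def normalizedPeak (x y : X) : Set C(X, ℂ) :=
  {f | f x - f y = 1 ∧ diam (range f) = 1}

theorem pair_mem_diamSet_of_mem_normalizedPeak {x y : X} (hxy : x ≠ y) {f : C(X, ℂ)}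
    (hf : f ∈ normalizedPeak x y) : ({x, y} : Set X) ∈ diamSet f :=
  ⟨x, y, hxy, rfl, by rw [hf.1, hf.2, norm_one]⟩

@[elab_as_elim]
theorem mem_diamSet_induction {x y : X} {P : C(X, ℂ) → Prop}
    (zero : ∀ f : C(X, ℂ), diam (range f) = 0 → P f)
    (smul : ∀ (c : ℂ) (f : C(X, ℂ)), c ≠ 0 → P f → P (c • f))
    (normalized : ∀ f ∈ normalizedPeak x y, P f) {f : C(X, ℂ)}
    (hf : ({x, y} : Set X) ∈ diamSet f) : P f := by
  have hD := norm_sub_eq_diam_of_mem_diamSet hf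
  by_cases hc : f x - f y = 0
  · exact zero f (by rw [← hD, hc, norm_zero])
  · have hnorm : (f x - f y)⁻¹ • f ∈ normalizedPeak x y := by
      refine ⟨?_, ?_⟩
      · simp only [ContinuousMap.smul_apply, smul_eq_mul, ← mul_sub, inv_mul_cancel₀ hc]
      · rw [diam_range_smul, ← hD, norm_inv, inv_mul_cancel₀ (norm_ne_zero_iff.2 hc)]
    simpa [smul_smul, hc] using smul _ _ hc (normalized _ hnorm)

variable [CompactSpace X]

theorem norm_sub_le_diam_range (f : C(X, ℂ)) (x y : X) :
    ‖f x - f y‖ ≤ diam (range f) := by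
  rw [← dist_eq_norm]
  exact dist_le_diam_of_mem (isCompact_range f.continuous).isBounded
    (mem_range_self x) (mem_range_self y)

theorem exists_norm_sub_eq_diam_range [Nonempty X] (f : C(X, ℂ)) :
    ∃ x y : X, ‖f x - f y‖ = diam (range f) := by
  obtain ⟨⟨x, y⟩, -, hmax⟩ := isCompact_univ.exists_isMaxOn univ_nonempty
    (continuous_norm.comp ((map_continuous f).fst'.sub (map_continuous f).snd')).continuousOn
  refine ⟨x, y, le_antisymm (norm_sub_le_diam_range f x y) ?_⟩
  refine diam_le_of_forall_dist_le (norm_nonneg _) ?_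
  rintro _ ⟨u, rfl⟩ _ ⟨v, rfl⟩
  rw [dist_eq_norm]
  exact hmax (mem_univ (u, v))

theorem eq_of_diam_range_eq_zero {f : C(X, ℂ)} (hf : diam (range f) = 0) (x y : X) :
    f x = f y :=
  sub_eq_zero.1 (norm_le_zero_iff.1 (hf ▸ norm_sub_le_diam_range f x y))

theorem pair_mem_diamSet_of_diam_eq_zero {f : C(X, ℂ)} (hf : diam (range f) = 0) {a b : X}
    (hab : a ≠ b) : ({a, b} : Set X) ∈ diamSet f :=
  ⟨a, b, hab, rfl, by rw [eq_of_diam_range_eq_zero hf a b, sub_self, norm_zero, hf]⟩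

theorem diam_range_eq_of_forall_mem_closedBall {g : C(X, ℂ)} {c : ℂ} {r : ℝ}
    (hg : ∀ z, g z ∈ closedBall c r) {x y : X} (h : ‖g x - g y‖ = 2 * r) :
    diam (range g) = 2 * r :=
  le_antisymm (diam_range_le_of_forall_mem_closedBall (by linarith [norm_nonneg (g x - g y)]) hg)
    (h ▸ norm_sub_le_diam_range g x y)

theorem convex_normalizedPeak (x y : X) : Convex ℝ (normalizedPeak x y) := by
  intro f hf g hg s t hs ht hst
  have hst' : (s : ℂ) + t = 1 := by exact_mod_cast hst
  have hval : (s • f + t • g) x - (s • f + t • g) y = 1 := by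
    simp only [ContinuousMap.add_apply, ContinuousMap.smul_apply, Complex.real_smul]
    linear_combination (s : ℂ) * hf.1 + (t : ℂ) * hg.1 + hst'
  refine ⟨hval, le_antisymm (diam_le_of_forall_dist_le zero_le_one ?_) ?_⟩
  · rintro _ ⟨u, rfl⟩ _ ⟨v, rfl⟩
    have hfuv := hf.2 ▸ norm_sub_le_diam_range f u v
    have hguv := hg.2 ▸ norm_sub_le_diam_range g u v
    have hsplit : (s • f + t • g) u - (s • f + t • g) v = s • (f u - f v) + t • (g u - g v) := by
      simp only [ContinuousMap.add_apply, ContinuousMap.smul_apply, smul_sub]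
      abel
    calc dist ((s • f + t • g) u) ((s • f + t • g) v)
        ≤ ‖s • (f u - f v)‖ + ‖t • (g u - g v)‖ := by
          rw [dist_eq_norm, hsplit]; exact norm_add_le _ _
      _ ≤ s * 1 + t * 1 := by
          rw [norm_smul, norm_smul, Real.norm_of_nonneg hs, Real.norm_of_nonneg ht]
          gcongr
      _ = 1 := by linarith
  · simpa only [hval, norm_one] using norm_sub_le_diam_range (s • f + t • g) x y

variable [T2Space X]

theorem normalizedPeak_nonempty {x y : X} (hxy : x ≠ y) : (normalizedPeak x y).Nonempty := by
  classical
  obtain ⟨g, hgS, hg⟩ := exists_continuousMap_eqOn_of_finite (toFinite {x, y})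
    (fun z => if z = x then 1 else 0) 2⁻¹ (r := 2⁻¹) (by norm_num)
    (by intro z _; split_ifs <;> norm_num [Complex.dist_eq])
  have hgx : g x = 1 := by simpa using hgS (mem_insert x {y})
  have hgy : g y = 0 := by simpa [hxy.symm] using hgS (mem_insert_of_mem x rfl)
  have hsub : g x - g y = 1 := by rw [hgx, hgy, sub_zero]
  refine ⟨g, hsub, ?_⟩
  rw [diam_range_eq_of_forall_mem_closedBall hg (x := x) (y := y) (by rw [hsub]; norm_num)]
  norm_num

theorem exists_phase_of_mem_Gset (φ : C(X, ℂ) →ₗ[ℂ] C(X, ℂ)) (hφ : DiamPreserving φ)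
    {x y a b : X} (hxy : x ≠ y) (h : ({a, b} : Set X) ∈ Gset φ {x, y}) :
    ∃ α : ℂ, ‖α‖ = 1 ∧ ∀ f : C(X, ℂ), ({x, y} : Set X) ∈ diamSet f →
      φ f a - φ f b = α * (f x - f y) := by
  let L : C(X, ℂ) →ₗ[ℂ] ℂ :=
    (ContinuousMap.evalCLM ℂ a - ContinuousMap.evalCLM ℂ b : C(X, ℂ) →L[ℂ] ℂ).toLinearMap ∘ₗ φ
  have hL : ∀ f ∈ normalizedPeak x y, ‖L f‖ = 1 := fun f hf => by
    rw [show L f = φ f a - φ f b from rfl, norm_sub_eq_diam_of_mem_diamSet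
      (h f (pair_mem_diamSet_of_mem_normalizedPeak hxy hf)), hφ, hf.2]
  obtain ⟨f₀, hf₀⟩ := normalizedPeak_nonempty hxy
  refine ⟨L f₀, hL f₀ hf₀, fun f hf => mem_diamSet_induction ?_ ?_ ?_ hf⟩
  · intro f hf
    rw [eq_of_diam_range_eq_zero hf x y, eq_of_diam_range_eq_zero ((hφ f).trans hf) a b]
    ring
  · intro c f _ hP
    simp only [map_smul, ContinuousMap.smul_apply, smul_eq_mul, ← mul_sub, hP]
    ring
  · intro f hf
    rw [hf.1, mul_one]
    exact eq_of_convex_of_norm_eq (L.restrictScalars ℝ) (convex_normalizedPeak x y) hL hf hf₀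

theorem exists_pair_mem_Gset (ψ : C(X, ℂ) →ₗ[ℂ] C(X, ℂ)) (hψ : DiamPreserving ψ) {a b : X}
    (hab : a ≠ b) : ∃ s₁ s₂ : X, s₁ ≠ s₂ ∧ ({s₁, s₂} : Set X) ∈ Gset ψ {a, b} := by
  have : Nonempty X := ⟨a⟩
  have : Nonempty (normalizedPeak a b) := (normalizedPeak_nonempty hab).to_subtype
  let peaks : normalizedPeak a b → Set (X × X) := fun g => {p | ‖ψ g p.1 - ψ g p.2‖ = 1}
  have closed (g) : IsClosed (peaks g) := isClosed_eq (by fun_prop) continuous_const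
  have nonempty (g) : (peaks g).Nonempty := by
    obtain ⟨u, v, huv⟩ := exists_norm_sub_eq_diam_range (ψ g)
    exact ⟨(u, v), huv.trans ((hψ g).trans g.2.2)⟩
  have directed : Directed (· ⊇ ·) peaks := by
    intro g g'
    let m : normalizedPeak a b := ⟨(2⁻¹ : ℝ) • g.1 + (2⁻¹ : ℝ) • g'.1,
      convex_normalizedPeak a b g.2 g'.2 (by norm_num) (by norm_num) (by norm_num)⟩
    have hle (h : normalizedPeak a b) (p : X × X) : ‖ψ h p.1 - ψ h p.2‖ ≤ 1 :=
      (norm_sub_le_diam_range (ψ h) p.1 p.2).trans_eq ((hψ h).trans h.2.2)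
    have hsplit : peaks m ⊆ peaks g ∩ peaks g' := fun p hp =>
      norm_eq_of_norm_midpoint_eq (hle g p) (hle g' p) <| by
        simpa only [peaks, m, mem_ofPred_eq, map_add, LinearMap.map_smul_of_tower,
          ContinuousMap.add_apply, ContinuousMap.smul_apply, smul_sub,
          add_sub_add_comm] using hp
    exact ⟨m, hsplit.trans inter_subset_left, hsplit.trans inter_subset_right⟩
  obtain ⟨⟨s₁, s₂⟩, hmem⟩ := IsCompact.nonempty_iInter_of_directed_nonempty_isCompact_isClosed
    peaks directed nonempty (fun g => (closed g).isCompact) closed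
  have hs (g : normalizedPeak a b) : ‖ψ g s₁ - ψ g s₂‖ = 1 := mem_iInter.1 hmem g
  have hs₁₂ : s₁ ≠ s₂ := by
    rintro rfl
    simpa using hs (Classical.arbitrary _)
  refine ⟨s₁, s₂, hs₁₂, fun g hg => mem_diamSet_induction ?_ ?_ ?_ hg⟩
  · exact fun g hg => pair_mem_diamSet_of_diam_eq_zero ((hψ g).trans hg) hs₁₂
  · intro c g hc hP
    rwa [map_smul, diamSet_smul hc]
  · exact fun g hg => ⟨s₁, s₂, hs₁₂, rfl, by rw [hψ, hg.2]; exact hs ⟨g, hg⟩⟩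

theorem eq_of_forall_mem_diamSet {s : Set X} {t₁ t₂ : X} (ht : t₁ ≠ t₂)
    (h : ∀ g : C(X, ℂ), ({t₁, t₂} : Set X) ∈ diamSet g → s ∈ diamSet g) : s = {t₁, t₂} := by
  classical
  have : Nonempty X := ⟨t₁⟩
  obtain ⟨s₁, s₂, hs, rfl, -⟩ := h 0 (pair_mem_diamSet_of_diam_eq_zero (by simp) ht)
  obtain ⟨g, hgS, hg⟩ := exists_continuousMap_eqOn_of_finite (toFinite {t₁, t₂, s₁, s₂})
    (fun z => if z = t₁ then 1 else if z = t₂ then 0 else 2⁻¹) 2⁻¹ (r := 2⁻¹) (by norm_num)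
    (by intro z _; split_ifs <;> norm_num [Complex.dist_eq])
  have hg₁ : g t₁ = 1 := by simpa using hgS (by simp : t₁ ∈ _)
  have hg₂ : g t₂ = 0 := by simpa [ht.symm] using hgS (by simp : t₂ ∈ _)
  have hdiam : diam (range g) = 1 := by
    rw [diam_range_eq_of_forall_mem_closedBall hg (x := t₁) (y := t₂) (by norm_num [hg₁, hg₂])]
    norm_num
  have hs₁₂ : dist (g s₁) (g s₂) = 1 := by
    rw [dist_eq_norm, norm_sub_eq_diam_of_mem_diamSet (h g ⟨t₁, t₂, ht, rfl, by
      rw [hg₁, hg₂, hdiam]; norm_num⟩), hdiam]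
  -- A point outside `{t₁, t₂}` is sent to the centre of the disc, within `1/2` of every value.
  have hmem (z) (hz : z = s₁ ∨ z = s₂) : z ∈ ({t₁, t₂} : Set X) := by
    by_contra hzt
    have hgz : g z = 2⁻¹ := by
      rw [hgS (by rcases hz with rfl | rfl <;> simp)]
      simp_all
    have hnear (w) : dist (g z) (g w) ≤ 2⁻¹ := by rw [hgz, dist_comm]; exact hg w
    rcases hz with rfl | rfl
    · linarith [hnear s₂]
    · linarith [hnear s₁, dist_comm (g s₁) (g z)]
  exact pair_eq_of_mem_of_mem hs (hmem s₁ (.inl rfl)) (hmem s₂ (.inr rfl))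

theorem exists_continuousMap_sub_eq_sub_eq {a b c d : X} (hab : a ≠ b) (hac : a ≠ c)
    (had : a ≠ d) (hbc : b ≠ c) (hbd : b ≠ d) (hcd : c ≠ d) {α β : ℂ} (hα : ‖α‖ = 1)
    (hβ : ‖β‖ = 1) :
    ∃ g : C(X, ℂ), g a - g b = α ∧ g c - g d = β ∧ diam (range g) = 1 := by
  classical
  obtain ⟨g, hgS, hg⟩ := exists_continuousMap_eqOn_of_finite (toFinite {a, b, c, d})
    (fun z => if z = a then α / 2 else if z = b then -(α / 2) else if z = c then β / 2
      else -(β / 2)) 0 (r := 2⁻¹) (by norm_num)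
    (by intro z _; split_ifs <;> simp [hα, hβ])
  have hga : g a = α / 2 := by simpa using hgS (by simp : a ∈ _)
  have hgb : g b = -(α / 2) := by simpa [hab.symm] using hgS (by simp : b ∈ _)
  have hgc : g c = β / 2 := by simpa [hac.symm, hbc.symm] using hgS (by simp : c ∈ _)
  have hgd : g d = -(β / 2) := by
    simpa [had.symm, hbd.symm, hcd.symm] using hgS (by simp : d ∈ _)
  have hgab : g a - g b = α := by rw [hga, hgb]; ring
  refine ⟨g, hgab, by rw [hgc, hgd]; ring, ?_⟩
  rw [diam_range_eq_of_forall_mem_closedBall hg (x := a) (y := b) (by rw [hgab, hα]; norm_num)]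
  norm_num

theorem pair_inter_pair_nonempty_of_mem_Gset (φ ψ : C(X, ℂ) →ₗ[ℂ] C(X, ℂ)) (hφ : DiamPreserving φ)
    (hφψ : ∀ g, φ (ψ g) = g) {x y z a b c d : X} (hxy : x ≠ y) (hxz : x ≠ z) (hab : a ≠ b)
    (hcd : c ≠ d) (hy : ({a, b} : Set X) ∈ Gset φ {x, y}) (hy' : ({x, y} : Set X) ∈ Gset ψ {a, b})
    (hz : ({c, d} : Set X) ∈ Gset φ {x, z}) (hz' : ({x, z} : Set X) ∈ Gset ψ {c, d}) :
    (({a, b} : Set X) ∩ {c, d}).Nonempty := by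
  obtain ⟨α, hα, hαf⟩ := exists_phase_of_mem_Gset φ hφ hxy hy
  obtain ⟨β, hβ, hβf⟩ := exists_phase_of_mem_Gset φ hφ hxz hz
  by_contra hdisj
  have hne {u v : X} (hu : u = a ∨ u = b) (hv : v = c ∨ v = d) : u ≠ v := by
    rintro rfl
    exact hdisj ⟨u, by rcases hu with rfl | rfl <;> simp, by rcases hv with rfl | rfl <;> simp⟩
  obtain ⟨g, hgab, hgcd, hg⟩ := exists_continuousMap_sub_eq_sub_eq hab (hne (.inl rfl) (.inl rfl))
    (hne (.inl rfl) (.inr rfl)) (hne (.inr rfl) (.inl rfl)) (hne (.inr rfl) (.inr rfl)) hcd hα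
    ((norm_neg β).trans hβ)
  have hf : diam (range (ψ g)) = 1 := by rw [← hφ, hφψ, hg]
  have hfxy : ψ g x - ψ g y = 1 := by
    have := hαf (ψ g) (hy' g ⟨a, b, hab, rfl, by rw [hgab, hα, hg]⟩)
    rw [hφψ, hgab] at this
    exact mul_left_cancel₀ (norm_ne_zero_iff.1 (by simp [hα])) (this.symm.trans (mul_one α).symm)
  have hfxz : ψ g x - ψ g z = -1 := by
    have := hβf (ψ g) (hz' g ⟨c, d, hcd, rfl, by rw [hgcd, norm_neg, hβ, hg]⟩)
    rw [hφψ, hgcd] at this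
    exact mul_left_cancel₀ (norm_ne_zero_iff.1 (by simp [hβ])) (this.symm.trans (by ring))
  have := hf ▸ norm_sub_le_diam_range (ψ g) y z
  rw [show ψ g y - ψ g z = -2 by linear_combination hfxz - hfxy] at this
  norm_num at this

theorem mem_Gset_of_injective (φ ψ : C(X, ℂ) →ₗ[ℂ] C(X, ℂ)) (hψ : DiamPreserving ψ)
    (hφψ : ∀ g, φ (ψ g) = g) (G' : TwoSet X → TwoSet X) (hinj : Function.Injective G')
    (hG' : ∀ p : TwoSet X, (G' p).val ∈ Gset φ p.val) (p : TwoSet X) :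
    p.val ∈ Gset ψ (G' p).val := by
  obtain ⟨a, b, hab, hp⟩ := (G' p).2
  obtain ⟨s₁, s₂, hs, hmem⟩ := exists_pair_mem_Gset ψ hψ hab
  let q : TwoSet X := ⟨{s₁, s₂}, s₁, s₂, hs, rfl⟩
  have hq : G' q = G' p := Subtype.ext <| hp ▸ eq_of_forall_mem_diamSet hab fun g hg =>
    hφψ g ▸ hG' q (ψ g) (hmem g hg)
  rw [hp, ← hinj hq]
  exact hmem

theorem inter_nonempty_of_mem_Gset (φ ψ : C(X, ℂ) →ₗ[ℂ] C(X, ℂ)) (hφ : DiamPreserving φ)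
    (hφψ : ∀ g, φ (ψ g) = g) (G' : TwoSet X → TwoSet X)
    (hG' : ∀ p : TwoSet X, (G' p).val ∈ Gset φ p.val)
    (hG'ψ : ∀ p : TwoSet X, p.val ∈ Gset ψ (G' p).val) {p q : TwoSet X}
    (h : (p.val ∩ q.val).Nonempty) : ((G' p).val ∩ (G' q).val).Nonempty := by
  obtain ⟨x, hxp, hxq⟩ := h
  obtain ⟨y, hxy, hp⟩ := p.exists_eq_pair_of_mem hxp
  obtain ⟨z, hxz, hq⟩ := q.exists_eq_pair_of_mem hxq
  obtain ⟨a, b, hab, hGp⟩ := (G' p).2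
  obtain ⟨c, d, hcd, hGq⟩ := (G' q).2
  rw [hGp, hGq]
  exact pair_inter_pair_nonempty_of_mem_Gset φ ψ hφ hφψ hxy hxz hab hcd
    (hp ▸ hGp ▸ hG' p) (hp ▸ hGp ▸ hG'ψ p) (hq ▸ hGq ▸ hG' q) (hq ▸ hGq ▸ hG'ψ q)

end

theorem Gmap_inter_nonempty_of_inter_nonempty_general
    {X : Type*} [TopologicalSpace X] [CompactSpace X] [T2Space X]
    (φ : C(X, ℂ) →ₗ[ℂ] C(X, ℂ)) (hbij : Function.Bijective φ)
    (hdp : DiamPreserving (⇑φ))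
    (G' : TwoSet X → TwoSet X) (hG'bij : Function.Bijective G')
    (hG' : ∀ p : TwoSet X, Gset (⇑φ) p.val = {(G' p).val})
    (p q : TwoSet X) :
    (p.val ∩ q.val ≠ ∅ → (G' p).val ∩ (G' q).val ≠ ∅) ∧
      ((∃! z : X, z ∈ p.val ∩ q.val) →
        ∃! z : X, z ∈ (G' p).val ∩ (G' q).val) := by
  let e := LinearEquiv.ofBijective φ hbij
  have hφψ (g) : φ (e.symm g) = g := e.apply_symm_apply g
  have hψ : DiamPreserving e.symm := fun g => by rw [← hdp, hφψ]
  have hfwd (r : TwoSet X) : (G' r).val ∈ Gset φ r.val := hG' r ▸ rfl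
  have hbwd := mem_Gset_of_injective φ e.symm.toLinearMap hψ hφψ G' hG'bij.1 hfwd
  have key {p q : TwoSet X} := inter_nonempty_of_mem_Gset (p := p) (q := q) φ e.symm.toLinearMap hdp
    hφψ G' hfwd hbwd
  refine ⟨fun h => (key (nonempty_iff_ne_empty.2 h)).ne_empty, ?_⟩
  rintro ⟨z, hz, huniq⟩
  obtain ⟨w, hw⟩ := key ⟨z, hz⟩
  refine ⟨w, hw, fun w' hw' => by_contra fun hne => ?_⟩
  obtain rfl := hG'bij.1 (TwoSet.eq_of_mem_inter hne hw' hw)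
  obtain ⟨a, b, hab, hp⟩ := p.2
  exact hab ((huniq a (by simp [hp])).trans (huniq b (by simp [hp])).symm)

/-- Step 5: if two two-element subsets intersect, then so do their `G'`-images;
moreover, if they have exactly one element in common, then so do their images. -/
theorem Gmap_inter_nonempty_of_inter_nonempty
    {X : Type*} [TopologicalSpace X] [CompactSpace X] [T2Space X]
    [FirstCountableTopology X]
    (h3 : ∃ a b c : X, a ≠ b ∧ a ≠ c ∧ b ≠ c)
    (φ : C(X, ℂ) →ₗ[ℂ] C(X, ℂ)) (hbij : Function.Bijective φ)
    (hdp : DiamPreserving (⇑φ))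
    (G' : TwoSet X → TwoSet X) (hG'bij : Function.Bijective G')
    (hG' : ∀ p : TwoSet X, Gset (⇑φ) p.val = {(G' p).val})
    (p q : TwoSet X) :
    (p.val ∩ q.val ≠ ∅ → (G' p).val ∩ (G' q).val ≠ ∅) ∧
      ((∃! z : X, z ∈ p.val ∩ q.val) →
        ∃! z : X, z ∈ (G' p).val ∩ (G' q).val) :=
  Gmap_inter_nonempty_of_inter_nonempty_general φ hbij hdp G' hG'bij hG' p q
end

section
/- Let X be a first countable compact Hausdorff topological space with at least three points and let φ : C(X,ℂ) → C(X,ℂ) be a diameter preserving linear bijection. Let G' be the bijection of the collection of two-element subsets of X associated with φ via G({x,y}) = {G'({x,y})}, and let G'_{-1} be the map associated in the same way with the inverse map φ⁻¹ (which is also a diameter preserving linear bijection). Then G'_{-1} = (G')⁻¹. -/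
/-!
Since `φ⁻¹ ∘ φ = id`, the pair `G'_{-1}(G'(p))` is diametral for every `f` for which `p` is
diametral, and this pins it down to `p`: for `c ∉ p = {a, b}`, a Urysohn function with values
in `[0, 1]`, equal to `0` at `a`, `1` at `b` and `1/2` at `c`, has `p` as a diametral pair of
diameter `1`, while every pair through `c` has distance at most `1/2`.
-/

open Set Metric

lemma exists_continuous_Icc_zero_one_half {X : Type*} [TopologicalSpace X] [NormalSpace X]
    [T1Space X] {a b c : X} (hab : a ≠ b) (hca : c ≠ a) (hcb : c ≠ b) :
    ∃ h : C(X, ℝ), (∀ z, h z ∈ Icc 0 1) ∧ h a = 0 ∧ h b = 1 ∧ h c = 1 / 2 := by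
  obtain ⟨g₁, hg₁a, hg₁bc, hg₁⟩ := exists_continuous_zero_one_of_isClosed
    (isClosed_singleton (x := a)) (toFinite {b, c}).isClosed (by simp [hab, hca.symm])
  obtain ⟨g₂, hg₂ac, hg₂b, hg₂⟩ := exists_continuous_zero_one_of_isClosed
    (toFinite {a, c}).isClosed (isClosed_singleton (x := b)) (by simp [hab.symm, hcb.symm])
  refine ⟨⟨fun z => (g₁ z + g₂ z) / 2, by fun_prop⟩, fun z => ?_, ?_, ?_, ?_⟩
  · have := hg₁ z; have := hg₂ z
    simp only [mem_Icc, ContinuousMap.coe_mk] at *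
    constructor <;> linarith
  · simp [hg₁a rfl, hg₂ac (mem_insert a {c})]
  · simp [hg₁bc (mem_insert b {c}), hg₂b rfl]
  · simp [hg₁bc (mem_insert_of_mem b rfl), hg₂ac (mem_insert_of_mem a rfl)]

lemma diam_range_ofReal_comp_eq_one {X : Type*} {h : X → ℝ} {a b : X}
    (hI : ∀ z, h z ∈ Icc 0 1) (ha : h a = 0) (hb : h b = 1) :
    diam (range ((↑) ∘ h : X → ℂ)) = 1 := by
  have hsub : range h ⊆ Icc 0 1 := range_subset_iff.2 hI
  rw [range_comp, Complex.isometry_ofReal.diam_image]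
  refine le_antisymm ?_ ?_
  · simpa [Real.diam_Icc zero_le_one] using diam_mono hsub (isBounded_Icc 0 1)
  · calc (1 : ℝ) = dist (h a) (h b) := by simp [ha, hb]
      _ ≤ diam (range h) :=
        dist_le_diam_of_mem (isBounded_Icc 0 1 |>.subset hsub) (mem_range_self a)
          (mem_range_self b)

lemma exists_norm_sub_eq_diam_of_mem_diamSet {X : Type*} [TopologicalSpace X]
    {f : C(X, ℂ)} {s : Set X} (hs : s ∈ diamSet f) {c : X} (hc : c ∈ s) :
    ∃ d, ‖f c - f d‖ = diam (range f) := by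
  obtain ⟨x, y, -, rfl, hxy⟩ := hs
  rcases hc with rfl | rfl
  · exact ⟨y, hxy⟩
  · exact ⟨x, by rwa [norm_sub_rev]⟩

lemma TwoSet.eq_of_mem_Gset_id {X : Type*} [TopologicalSpace X] [NormalSpace X] [T1Space X]
    {p q : TwoSet X} (h : q.val ∈ Gset id p.val) : q = p := by
  obtain ⟨a, b, hab, hp⟩ := p.2
  obtain ⟨x, y, hxy, hq⟩ := q.2
  have hsub : q.val ⊆ p.val := by
    intro c hc
    by_contra hcp
    rw [hp, mem_insert_iff, mem_singleton_iff, not_or] at hcp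
    obtain ⟨g, hgI, hga, hgb, hgc⟩ := exists_continuous_Icc_zero_one_half hab hcp.1 hcp.2
    let f : C(X, ℂ) := (⟨(↑), Complex.continuous_ofReal⟩ : C(ℝ, ℂ)).comp g
    have hnorm (z w : X) : ‖f z - f w‖ = |g z - g w| := by
      simp [f, ← Complex.ofReal_sub, Complex.norm_real]
    have hdiam : diam (range f) = 1 := diam_range_ofReal_comp_eq_one hgI hga hgb
    have hpf : p.val ∈ diamSet f := ⟨a, b, hab, hp, by simp [hnorm, hdiam, hga, hgb]⟩
    obtain ⟨d, hd⟩ := exists_norm_sub_eq_diam_of_mem_diamSet (f := f) (h f hpf) hc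
    obtain ⟨hgd₀, hgd₁⟩ := hgI d
    rw [hnorm, hdiam, hgc] at hd
    rcases (abs_eq zero_le_one).1 hd with h' | h' <;> linarith
  exact Subtype.ext <| eq_of_subset_of_ncard_le hsub
    (by rw [hp, hq, ncard_pair hab, ncard_pair hxy]) (hp ▸ toFinite _)

lemma mem_Gset_comp {X : Type*} [TopologicalSpace X] {φ ψ : C(X, ℂ) → C(X, ℂ)}
    {s t u : Set X} (ht : t ∈ Gset φ s) (hu : u ∈ Gset ψ t) : u ∈ Gset (ψ ∘ φ) s :=
  fun f hf => hu (φ f) (ht f hf)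

lemma leftInverse_of_forall_mem_Gset {X : Type*} [TopologicalSpace X] [NormalSpace X]
    [T1Space X] (e : C(X, ℂ) ≃ C(X, ℂ)) {G G₁ : TwoSet X → TwoSet X}
    (hG : ∀ p, (G p).val ∈ Gset e p.val) (hG₁ : ∀ p, (G₁ p).val ∈ Gset e.symm p.val) :
    Function.LeftInverse G₁ G := fun p =>
  TwoSet.eq_of_mem_Gset_id <| e.symm_comp_self ▸ mem_Gset_comp (hG p) (hG₁ (G p))

theorem Gmap_inv_eq_inv_Gmap_general
    {X : Type*} [TopologicalSpace X] [CompactSpace X] [T2Space X]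
    (φ : C(X, ℂ) ≃ₗ[ℂ] C(X, ℂ))
    (G' : TwoSet X → TwoSet X)
    (hG' : ∀ p : TwoSet X, Gset (⇑φ) p.val = {(G' p).val})
    (G'inv : TwoSet X → TwoSet X)
    (hG'inv : ∀ p : TwoSet X, Gset (⇑φ.symm) p.val = {(G'inv p).val}) :
    ∀ p : TwoSet X, G'inv (G' p) = p ∧ G' (G'inv p) = p := by
  have hφ (p : TwoSet X) : (G' p).val ∈ Gset φ p.val := (hG' p).symm ▸ rfl
  have hφinv (p : TwoSet X) : (G'inv p).val ∈ Gset φ.symm p.val := (hG'inv p).symm ▸ rfl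
  exact fun p => ⟨leftInverse_of_forall_mem_Gset φ.toEquiv hφ hφinv p,
    leftInverse_of_forall_mem_Gset φ.toEquiv.symm hφinv hφ p⟩

/-- The map `G'_{-1}` associated with `φ⁻¹` is the inverse of the map `G'`
associated with `φ`. -/
theorem Gmap_inv_eq_inv_Gmap
    {X : Type*} [TopologicalSpace X] [CompactSpace X] [T2Space X]
    [FirstCountableTopology X]
    (h3 : ∃ a b c : X, a ≠ b ∧ a ≠ c ∧ b ≠ c)
    (φ : C(X, ℂ) ≃ₗ[ℂ] C(X, ℂ)) (hdp : DiamPreserving (⇑φ))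
    (G' : TwoSet X → TwoSet X)
    (hG' : ∀ p : TwoSet X, Gset (⇑φ) p.val = {(G' p).val})
    (G'inv : TwoSet X → TwoSet X)
    (hG'inv : ∀ p : TwoSet X, Gset (⇑φ.symm) p.val = {(G'inv p).val}) :
    ∀ p : TwoSet X, G'inv (G' p) = p ∧ G' (G'inv p) = p :=
  Gmap_inv_eq_inv_Gmap_general φ G' hG' G'inv hG'inv
end
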